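/- arXiv:2408.10066 — 2 statements merged into one kernel-verified Lean document; each statement's English description precedes it below -/
import Mathlib

section
/- Let γ ∈ (0,1), let x ∈ 𝒰*, and let r, δ > 0 be such that the closed Euclidean ball B(x, r+δ) is contained in 𝒰* and xᵢ + r < 𝔼[uᵢ] for every i ∈ [n]. Set C = 4n²v̄²·(1 + maxᵢ 𝔼[uᵢ] / minᵢ(𝔼[uᵢ] − xᵢ − r))². If r·γ/(1−γ) ≥ δ ≥ C·(1−γ)/(γ·r), then the closed Euclidean ball B(x, r) is contained in 𝒰_γ. -/
open MeasureTheory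

noncomputable section

variable {n : ℕ}

/-- The cube `[0, v̄]ⁿ` of possible report/utility profiles. -/
def cube (n : ℕ) (vbar : ℝ) : Set (Fin n → ℝ) := {v | ∀ i, v i ∈ Set.Icc (0 : ℝ) vbar}

/-- The simplex `Δₙ` (with a do-nothing option). -/
def simplexSet (n : ℕ) : Set (Fin n → ℝ) := {y | (∀ i, 0 ≤ y i) ∧ ∑ i, y i ≤ 1}

/-- An allocation function: measurable, valued in the simplex on the cube. -/
def IsAllocation (vbar : ℝ) (p : (Fin n → ℝ) → (Fin n → ℝ)) : Prop :=
  Measurable p ∧ ∀ v ∈ cube n vbar, p v ∈ simplexSet n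

/-- Interim value for agent `i` reporting `b`: the expectation of the `i`-th coordinate of `g`
over the other agents' utilities. -/
def interimFn (D : Fin n → Measure ℝ) (g : (Fin n → ℝ) → (Fin n → ℝ)) (i : Fin n) (b : ℝ) : ℝ :=
  ∫ v, g (Function.update v i b) i ∂(Measure.pi D)

/-- Realized utility vector of an allocation function. -/
def realized (D : Fin n → Measure ℝ) (p : (Fin n → ℝ) → (Fin n → ℝ)) : Fin n → ℝ :=
  fun i => ∫ v, v i * p v i ∂(Measure.pi D)

/-- The full-information achievable set `𝒰*`. -/
def Ustar (D : Fin n → Measure ℝ) (vbar : ℝ) : Set (Fin n → ℝ) :=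
  {U | ∃ p, IsAllocation vbar p ∧ U = realized D p}

/-- One-shot incentive compatibility. -/
def OneShotIC (D : Fin n → Measure ℝ) (vbar : ℝ) (p : (Fin n → ℝ) → (Fin n → ℝ)) : Prop :=
  ∀ i, ∀ a ∈ Set.Icc (0 : ℝ) vbar, ∀ b ∈ Set.Icc (0 : ℝ) vbar,
    a * interimFn D p i b ≤ a * interimFn D p i a

/-- The one-shot achievable set `𝒰₀`. -/
def U0set (D : Fin n → Measure ℝ) (vbar : ℝ) : Set (Fin n → ℝ) :=
  {U | ∃ p, IsAllocation vbar p ∧ OneShotIC D vbar p ∧ U = realized D p}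

/-- Validity of a promised-utility mechanism on a region `R`. -/
def PromisedOK (D : Fin n → Measure ℝ) (vbar γ : ℝ) (R : Set (Fin n → ℝ))
    (pf Wf : (Fin n → ℝ) → (Fin n → ℝ) → (Fin n → ℝ)) : Prop :=
  (∀ U ∈ R, IsAllocation vbar (pf U)) ∧
  (∀ U ∈ R, Measurable (Wf U)) ∧
  (∀ U ∈ R, ∀ i, U i =
    ∫ v, ((1 - γ) * (v i * pf U v i) + γ * Wf U v i) ∂(Measure.pi D)) ∧
  (∀ U ∈ R, ∀ v ∈ cube n vbar, Wf U v ∈ R) ∧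
  (∀ U ∈ R, ∀ i, ∀ a ∈ Set.Icc (0 : ℝ) vbar, ∀ b ∈ Set.Icc (0 : ℝ) vbar,
    (1 - γ) * a * interimFn D (pf U) i b + γ * interimFn D (Wf U) i b ≤
      (1 - γ) * a * interimFn D (pf U) i a + γ * interimFn D (Wf U) i a)

/-- The `γ`-discounted achievable set `𝒰_γ`. -/
def Ugamma (D : Fin n → Measure ℝ) (vbar γ : ℝ) : Set (Fin n → ℝ) :=
  {U₀ | (∀ i, 0 ≤ U₀ i) ∧ ∃ R, R ⊆ Ustar D vbar ∧ U₀ ∈ R ∧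
    ∃ pf Wf, PromisedOK D vbar γ R pf Wf}

/-- The finite-horizon achievable sets `𝒱_T` (with junk value `∅` at `T = 0`). -/
def Vset (D : Fin n → Measure ℝ) (vbar : ℝ) : ℕ → Set (Fin n → ℝ)
  | 0 => ∅
  | 1 => U0set D vbar
  | (T + 2) =>
    {U | (∀ i, 0 ≤ U i) ∧ ∃ p W : (Fin n → ℝ) → (Fin n → ℝ), IsAllocation vbar p ∧ Measurable W ∧
      (∀ i, U i = ∫ v, ((1 - (1 - 1 / ((T : ℝ) + 2))) * (v i * p v i)
          + (1 - 1 / ((T : ℝ) + 2)) * W v i) ∂(Measure.pi D)) ∧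
      (∀ v ∈ cube n vbar, W v ∈ Vset D vbar (T + 1)) ∧
      (∀ i, ∀ a ∈ Set.Icc (0 : ℝ) vbar, ∀ b ∈ Set.Icc (0 : ℝ) vbar,
        (1 - (1 - 1 / ((T : ℝ) + 2))) * a * interimFn D p i b
            + (1 - 1 / ((T : ℝ) + 2)) * interimFn D W i b ≤
          (1 - (1 - 1 / ((T : ℝ) + 2))) * a * interimFn D p i a
            + (1 - 1 / ((T : ℝ) + 2)) * interimFn D W i a)}

/-- `sup_{x ∈ S} α ⬝ x`. -/
def supVal (α : Fin n → ℝ) (S : Set (Fin n → ℝ)) : ℝ :=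
  sSup ((fun x => ∑ i, α i * x i) '' S)

/-- `Z = maxᵢ αᵢ uᵢ`. -/
def Zmax (α v : Fin n → ℝ) : ℝ := ⨆ i, α i * v i

/-- `Zᵢ = max_{j ≠ i} αⱼ uⱼ`. -/
def Zminus (α : Fin n → ℝ) (i : Fin n) (v : Fin n → ℝ) : ℝ :=
  ⨆ j ∈ ({i}ᶜ : Set (Fin n)), α j * v j

/-- `Z_B = max_{j ∈ B} αⱼ uⱼ`. -/
def ZB (α : Fin n → ℝ) (B : Finset (Fin n)) (v : Fin n → ℝ) : ℝ := ⨆ j ∈ B, α j * v j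

/-- `max_{x ∈ 𝒰*} α ⬝ x = 𝔼[maxᵢ αᵢ uᵢ]`. -/
def maxUstar (D : Fin n → Measure ℝ) (α : Fin n → ℝ) : ℝ :=
  ∫ v, Zmax α v ∂(Measure.pi D)

/-- Euclidean distance on `Fin n → ℝ`. -/
def euclDist (x y : Fin n → ℝ) : ℝ := Real.sqrt (∑ i, (x i - y i) ^ 2)

/-- Euclidean norm on `Fin n → ℝ`. -/
def euclNorm (x : Fin n → ℝ) : ℝ := Real.sqrt (∑ i, x i ^ 2)

/-- Closed Euclidean ball. -/
def euclBall (x : Fin n → ℝ) (r : ℝ) : Set (Fin n → ℝ) := {y | euclDist x y ≤ r}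

/-- Open Euclidean ball. -/
def euclBallOpen (x : Fin n → ℝ) (r : ℝ) : Set (Fin n → ℝ) := {y | euclDist x y < r}

/-- The set `I` of non-superfluous agents for direction `α`. -/
def Iset (D : Fin n → Measure ℝ) (α : Fin n → ℝ) : Set (Fin n) :=
  {i | (∀ j, j ≠ i → 0 < Measure.pi D {v | α j * v j < α i * v i}) ∧
    ¬∃ m M : ℝ, 0 ≤ m ∧ m ≤ M ∧
      Measure.pi D {v | α i * v i ∈ Set.Icc m M ∪ {0}} = 1 ∧
      ∀ j, j ≠ i → Measure.pi D {v | α j * v j ∈ Set.Ioo m M} = 0}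

/-- The set `Ĩ = I ∪ {i : ℙ(αᵢuᵢ = Zᵢ > 0) > 0}`. -/
def Itilde (D : Fin n → Measure ℝ) (α : Fin n → ℝ) : Set (Fin n) :=
  Iset D α ∪ {i | 0 < Measure.pi D {v | α i * v i = Zminus α i v ∧ 0 < Zminus α i v}}

end

namespace BallProof

open scoped Classical

variable {n : ℕ}

/-- winner predicate with lexicographic tie-breaking -/
def winsAt (h : Fin n → ℝ) (i : Fin n) (v : Fin n → ℝ) : Prop :=
  0 < h i ∧ 0 < h i * v i ∧ ∀ j, 0 < h j → j ≠ i →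
    (h j * v j < h i * v i ∨ (h j * v j = h i * v i ∧ i < j))

noncomputable def alloc (h : Fin n → ℝ) : (Fin n → ℝ) → (Fin n → ℝ) :=
  fun v i => if winsAt h i v then 1 else 0

lemma alloc_nonneg (h : Fin n → ℝ) (v : Fin n → ℝ) (i : Fin n) : 0 ≤ alloc h v i := by
  unfold alloc; split <;> norm_num

lemma alloc_le_one (h : Fin n → ℝ) (v : Fin n → ℝ) (i : Fin n) : alloc h v i ≤ 1 := by
  unfold alloc; split <;> norm_num

lemma winsAt_unique {h : Fin n → ℝ} {v : Fin n → ℝ} {i j : Fin n}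
    (hi : winsAt h i v) (hj : winsAt h j v) : i = j := by
  by_contra hne
  obtain ⟨hpi, hii, hfi⟩ := hi
  obtain ⟨hpj, hjj, hfj⟩ := hj
  rcases hfi j hpj (fun hh => hne (hh ▸ rfl)) with h1 | ⟨h1, h2⟩ <;>
    rcases hfj i hpi (fun hh => hne (hh.symm ▸ rfl)) with h3 | ⟨h3, h4⟩
  · linarith
  · linarith
  · linarith
  · exact absurd (h2.trans h4) (lt_irrefl i)

lemma alloc_mem_simplex (h : Fin n → ℝ) (v : Fin n → ℝ) : alloc h v ∈ simplexSet n := by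
  refine ⟨alloc_nonneg h v, ?_⟩
  by_cases hw : ∃ w, winsAt h w v
  · obtain ⟨w, hw⟩ := hw
    have he : ∀ i, alloc h v i = if i = w then 1 else 0 := by
      intro i
      unfold alloc
      by_cases hi : winsAt h i v
      · have hiw := winsAt_unique hi hw
        subst hiw
        simp [hi]
      · have : ¬ i = w := by rintro rfl; exact hi hw
        simp [hi, this]
    rw [Finset.sum_congr rfl (fun i _ => he i)]
    simp
  · have he : ∀ i, alloc h v i = 0 := by
      intro i; unfold alloc
      have : ¬ winsAt h i v := fun hc => hw ⟨i, hc⟩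
      simp [this]
    rw [Finset.sum_congr rfl (fun i _ => he i)]
    simp

lemma exists_winsAt {h : Fin n → ℝ} {v : Fin n → ℝ}
    (hex : ∃ i, 0 < h i ∧ 0 < h i * v i) : ∃ w, winsAt h w v := by
  set A : Finset (Fin n) := Finset.univ.filter (fun i => 0 < h i ∧ 0 < h i * v i) with hA
  have hAne : A.Nonempty := by
    obtain ⟨i, hi⟩ := hex
    exact ⟨i, by simp [hA, hi.1, hi.2]⟩
  obtain ⟨m, hmA, hmax⟩ := A.exists_max_image (fun i => h i * v i) hAne
  set B : Finset (Fin n) := A.filter (fun i => h i * v i = h m * v m) with hB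
  have hBne : B.Nonempty := ⟨m, by simp [hB, hmA]⟩
  set w := B.min' hBne with hw
  have hwB : w ∈ B := B.min'_mem hBne
  have hwA : w ∈ A := (Finset.mem_filter.1 hwB).1
  have hwEq : h w * v w = h m * v m := (Finset.mem_filter.1 hwB).2
  have hwpos : 0 < h w := ((Finset.mem_filter.1 hwA).2).1
  have hwval : 0 < h w * v w := ((Finset.mem_filter.1 hwA).2).2
  refine ⟨w, hwpos, hwval, ?_⟩
  intro j hj hjw
  by_cases hjval : 0 < h j * v j
  · have hjA : j ∈ A := by simp [hA, hj, hjval]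
    have hle : h j * v j ≤ h m * v m := hmax j hjA
    rcases lt_or_eq_of_le hle with hlt | heq
    · left; rw [hwEq]; exact hlt
    · right
      refine ⟨by rw [hwEq]; exact heq, ?_⟩
      have hjB : j ∈ B := by simp [hB, hjA, heq]
      have hwj : w ≤ j := B.min'_le j hjB
      exact lt_of_le_of_ne hwj (fun hh => hjw hh.symm)
  · left; exact lt_of_le_of_lt (le_of_not_gt hjval) hwval

lemma alloc_opt (h : Fin n → ℝ) (v : Fin n → ℝ) (hv : ∀ i, 0 ≤ v i)
    {q : Fin n → ℝ} (hq : q ∈ simplexSet n) :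
    ∑ i, h i * v i * q i ≤ ∑ i, h i * v i * alloc h v i := by
  obtain ⟨hq0, hq1⟩ := hq
  by_cases hw : ∃ w, winsAt h w v
  · obtain ⟨w, hwin⟩ := hw
    have hrhs : ∑ i, h i * v i * alloc h v i = h w * v w := by
      have he : ∀ i, h i * v i * alloc h v i = if i = w then h w * v w else 0 := by
        intro i
        unfold alloc
        by_cases hi : winsAt h i v
        · have := winsAt_unique hi hwin; subst this; simp [hi]
        · have hne : ¬ i = w := by rintro rfl; exact hi hwin
          simp [hi, hne]
      rw [Finset.sum_congr rfl (fun i _ => he i)]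
      simp
    rw [hrhs]
    have hterm : ∀ i, h i * v i * q i ≤ h w * v w * q i := by
      intro i
      have hWpos : 0 < h w * v w := hwin.2.1
      by_cases hip : 0 < h i
      · by_cases hiw : i = w
        · subst hiw; exact le_refl _
        · rcases hwin.2.2 i hip hiw with hlt | ⟨heq, _⟩
          · exact mul_le_mul_of_nonneg_right (le_of_lt hlt) (hq0 i)
          · exact mul_le_mul_of_nonneg_right (le_of_eq heq) (hq0 i)
      · have hle : h i * v i ≤ 0 := mul_nonpos_of_nonpos_of_nonneg (le_of_not_gt hip) (hv i)
        exact mul_le_mul_of_nonneg_right (hle.trans (le_of_lt hWpos)) (hq0 i)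
    calc ∑ i, h i * v i * q i ≤ ∑ i, h w * v w * q i := Finset.sum_le_sum (fun i _ => hterm i)
      _ = h w * v w * ∑ i, q i := by rw [← Finset.mul_sum]
      _ ≤ h w * v w * 1 := mul_le_mul_of_nonneg_left hq1 (le_of_lt hwin.2.1)
      _ = h w * v w := mul_one _
  · have hrhs : ∑ i, h i * v i * alloc h v i = 0 := by
      apply Finset.sum_eq_zero; intro i _
      have hne : ¬ winsAt h i v := fun hc => hw ⟨i, hc⟩
      unfold alloc; simp [hne]
    rw [hrhs]
    apply Finset.sum_nonpos
    intro i _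
    have hnp : ¬ (0 < h i ∧ 0 < h i * v i) := fun hc => hw (exists_winsAt ⟨i, hc⟩)
    by_cases hip : 0 < h i
    · have hle : ¬ 0 < h i * v i := fun hc => hnp ⟨hip, hc⟩
      exact mul_nonpos_of_nonpos_of_nonneg (le_of_not_gt hle) (hq0 i)
    · have hle : h i * v i ≤ 0 := mul_nonpos_of_nonpos_of_nonneg (le_of_not_gt hip) (hv i)
      exact mul_nonpos_of_nonpos_of_nonneg hle (hq0 i)

lemma measurableSet_winsAt (h : Fin n → ℝ) (i : Fin n) :
    MeasurableSet {v : Fin n → ℝ | winsAt h i v} := by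
  have hmeas : ∀ j : Fin n, Measurable (fun v : Fin n → ℝ => h j * v j) := by
    intro j
    exact measurable_const.mul (measurable_pi_apply (a := j))
  have hset : {v : Fin n → ℝ | winsAt h i v} =
      {v | 0 < h i} ∩ ({v | 0 < h i * v i} ∩
        ⋂ j : Fin n, {v | 0 < h j → j ≠ i →
          (h j * v j < h i * v i ∨ (h j * v j = h i * v i ∧ i < j))}) := by
    ext v
    simp only [winsAt, Set.mem_inter_iff, Set.mem_setOf_eq, Set.mem_iInter]
    try tauto
  rw [hset]
  refine MeasurableSet.inter ?_ (MeasurableSet.inter ?_ ?_)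
  · by_cases hp : 0 < h i
    · have : {v : Fin n → ℝ | 0 < h i} = Set.univ := by ext v; simp [hp]
      rw [this]; exact MeasurableSet.univ
    · have : {v : Fin n → ℝ | 0 < h i} = ∅ := by ext v; simp [hp]
      rw [this]; exact MeasurableSet.empty
  · exact measurableSet_lt measurable_const (hmeas i)
  · apply MeasurableSet.iInter
    intro j
    by_cases hp : 0 < h j
    · by_cases hji : j ≠ i
      · have hset2 : {v : Fin n → ℝ | 0 < h j → j ≠ i →
            (h j * v j < h i * v i ∨ (h j * v j = h i * v i ∧ i < j))} =
            {v | h j * v j < h i * v i} ∪ ({v | h j * v j = h i * v i} ∩ {v | i < j}) := by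
          ext v; simp [hp, hji]
        rw [hset2]
        refine MeasurableSet.union (measurableSet_lt (hmeas j) (hmeas i))
          (MeasurableSet.inter (measurableSet_eq_fun (hmeas j) (hmeas i)) ?_)
        by_cases hij : i < j
        · have : {v : Fin n → ℝ | i < j} = Set.univ := by ext v; simp [hij]
          rw [this]; exact MeasurableSet.univ
        · have : {v : Fin n → ℝ | i < j} = ∅ := by ext v; simp [hij]
          rw [this]; exact MeasurableSet.empty
      · have : {v : Fin n → ℝ | 0 < h j → j ≠ i →
            (h j * v j < h i * v i ∨ (h j * v j = h i * v i ∧ i < j))} = Set.univ := by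
          ext v; simp [hji]
        rw [this]; exact MeasurableSet.univ
    · have : {v : Fin n → ℝ | 0 < h j → j ≠ i →
          (h j * v j < h i * v i ∨ (h j * v j = h i * v i ∧ i < j))} = Set.univ := by
        ext v; simp [hp]
      rw [this]; exact MeasurableSet.univ

lemma alloc_measurable (h : Fin n → ℝ) : Measurable (alloc h) := by
  apply measurable_pi_lambda
  intro i
  unfold alloc
  exact Measurable.ite (measurableSet_winsAt h i) measurable_const measurable_const

lemma winsAt_mono {h : Fin n → ℝ} {i : Fin n} {v : Fin n → ℝ} {b₁ b₂ : ℝ} (hb : b₁ ≤ b₂)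
    (hw : winsAt h i (Function.update v i b₁)) : winsAt h i (Function.update v i b₂) := by
  obtain ⟨hp, hval, hbeats⟩ := hw
  simp only [Function.update_self] at hval
  have hval2 : 0 < h i * b₂ := lt_of_lt_of_le hval (mul_le_mul_of_nonneg_left hb (le_of_lt hp))
  refine ⟨hp, by simpa using hval2, ?_⟩
  intro j hj hji
  have hupd : ∀ w : ℝ, Function.update v i w j = v j := fun w => Function.update_of_ne hji _ _
  have hb1 := hbeats j hj hji
  rw [hupd b₁] at hb1
  rw [hupd b₂]
  simp only [Function.update_self] at hb1 ⊢
  have hle : h i * b₁ ≤ h i * b₂ := mul_le_mul_of_nonneg_left hb (le_of_lt hp)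
  rcases hb1 with h1 | ⟨h1, h2⟩
  · left; exact lt_of_lt_of_le h1 hle
  · rcases lt_or_eq_of_le hle with h3 | h3
    · left; rw [h1]; exact h3
    · right; exact ⟨h1.trans h3, h2⟩

lemma alloc_mono (h : Fin n → ℝ) (i : Fin n) (v : Fin n → ℝ) {b₁ b₂ : ℝ} (hb : b₁ ≤ b₂) :
    alloc h (Function.update v i b₁) i ≤ alloc h (Function.update v i b₂) i := by
  unfold alloc
  by_cases hw : winsAt h i (Function.update v i b₁)
  · simp [hw, winsAt_mono hb hw]
  · simp only [hw, if_false]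
    split <;> norm_num

section Myerson

/-- Myerson payment associated to an interim allocation `Q`. -/
noncomputable def mFun (Q : ℝ → ℝ) (b : ℝ) : ℝ := b * Q b - ∫ t in (0:ℝ)..b, Q t

variable {Q : ℝ → ℝ}

lemma mono_intInt (hQ : Monotone Q) (a b : ℝ) : IntervalIntegrable Q volume a b :=
  (hQ.monotoneOn _).intervalIntegrable

lemma primitive_mono (hQ : Monotone Q) (hQ0 : ∀ t, 0 ≤ Q t) :
    Monotone (fun b => ∫ t in (0:ℝ)..b, Q t) := by
  intro b₁ b₂ hb
  have hadj := intervalIntegral.integral_add_adjacent_intervals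
    (mono_intInt hQ 0 b₁) (mono_intInt hQ b₁ b₂)
  have hpos : 0 ≤ ∫ t in b₁..b₂, Q t :=
    intervalIntegral.integral_nonneg hb (fun u _ => hQ0 u)
  simp only []
  linarith

lemma myerson_ic (hQ : Monotone Q) {a b : ℝ} :
    a * Q b - mFun Q b ≤ a * Q a - mFun Q a := by
  have hadj := intervalIntegral.integral_add_adjacent_intervals
    (mono_intInt hQ 0 b) (mono_intInt hQ b a)
  have key : (a - b) * Q b ≤ ∫ t in b..a, Q t := by
    rcases le_total b a with hba | hab
    · have hmono : ∫ t in b..a, (fun _ : ℝ => Q b) t ≤ ∫ t in b..a, Q t :=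
        intervalIntegral.integral_mono_on hba intervalIntegrable_const (mono_intInt hQ b a)
          (fun t ht => hQ ht.1)
      rw [intervalIntegral.integral_const, smul_eq_mul] at hmono
      linarith [hmono]
    · have hmono : ∫ t in a..b, Q t ≤ ∫ t in a..b, (fun _ : ℝ => Q b) t :=
        intervalIntegral.integral_mono_on hab (mono_intInt hQ a b) intervalIntegrable_const
          (fun t ht => hQ ht.2)
      rw [intervalIntegral.integral_const, smul_eq_mul] at hmono
      have hsymm : ∫ t in b..a, Q t = - ∫ t in a..b, Q t := intervalIntegral.integral_symm a b
      rw [hsymm]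
      linarith
  unfold mFun
  linarith

lemma mFun_nonneg (hQ : Monotone Q) {b : ℝ} (hb : 0 ≤ b) : 0 ≤ mFun Q b := by
  have hmono : ∫ t in (0:ℝ)..b, Q t ≤ ∫ t in (0:ℝ)..b, (fun _ : ℝ => Q b) t :=
    intervalIntegral.integral_mono_on hb (mono_intInt hQ 0 b) intervalIntegrable_const
      (fun t ht => hQ ht.2)
  rw [intervalIntegral.integral_const, smul_eq_mul] at hmono
  unfold mFun
  linarith

lemma mFun_le (hQ0 : ∀ t, 0 ≤ Q t) (hQ1 : ∀ t, Q t ≤ 1) {b : ℝ} (hb : 0 ≤ b) :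
    mFun Q b ≤ b := by
  unfold mFun
  have h1 : 0 ≤ ∫ t in (0:ℝ)..b, Q t :=
    intervalIntegral.integral_nonneg hb (fun u _ => hQ0 u)
  nlinarith [hQ1 b, hQ0 b]

lemma mFun_le_theta (hQ : Monotone Q) (hQ0 : ∀ t, 0 ≤ Q t) (hQ1 : ∀ t, Q t ≤ 1)
    {θ b : ℝ} (hθ : 0 ≤ θ) (hb : 0 ≤ b) (hQθ : ∀ t, θ < t → Q t = 1) :
    mFun Q b ≤ θ := by
  rcases le_total b θ with h | h
  · exact (mFun_le hQ0 hQ1 hb).trans h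
  · have hadj := intervalIntegral.integral_add_adjacent_intervals
      (mono_intInt hQ 0 θ) (mono_intInt hQ θ b)
    have h2 : ∫ t in θ..b, Q t = b - θ := by
      have hcong : ∫ t in θ..b, Q t = ∫ t in θ..b, (fun _ : ℝ => (1:ℝ)) t := by
        apply intervalIntegral.integral_congr_ae
        apply Filter.Eventually.of_forall
        intro t ht
        rw [Set.uIoc_of_le h] at ht
        exact hQθ t ht.1
      rw [hcong, intervalIntegral.integral_const, smul_eq_mul, mul_one]
    have h3 : 0 ≤ ∫ t in (0:ℝ)..θ, Q t :=
      intervalIntegral.integral_nonneg hθ (fun u _ => hQ0 u)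
    have h4 : Q b ≤ 1 := hQ1 b
    unfold mFun
    nlinarith
  
lemma mFun_measurable (hQ : Monotone Q) (hQ0 : ∀ t, 0 ≤ Q t) : Measurable (mFun Q) :=
  (measurable_id.mul hQ.measurable).sub (primitive_mono hQ hQ0).measurable

end Myerson

section MeasureLayer

variable {n : ℕ} {D : Fin n → Measure ℝ} {vbar : ℝ} [∀ i, IsProbabilityMeasure (D i)]

lemma pi_cube_ae (hsupp : ∀ i, D i (Set.Icc (0 : ℝ) vbar)ᶜ = 0) :
    ∀ᵐ v ∂(Measure.pi D), v ∈ cube n vbar := by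
  have hc : cube n vbar = Set.pi Set.univ (fun _ : Fin n => Set.Icc (0:ℝ) vbar) := by
    ext v
    constructor
    · intro hv i _; exact hv i
    · intro hv i; exact hv i (Set.mem_univ i)
  have hm : MeasurableSet (Set.pi Set.univ (fun _ : Fin n => Set.Icc (0:ℝ) vbar)) :=
    MeasurableSet.univ_pi fun _ => measurableSet_Icc
  have hone : ∀ i, D i (Set.Icc (0:ℝ) vbar) = 1 := fun i =>
    (prob_compl_eq_zero_iff measurableSet_Icc).1 (hsupp i)
  have hzero : Measure.pi D (cube n vbar)ᶜ = 0 := by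
    rw [hc, prob_compl_eq_zero_iff hm, Measure.pi_pi]
    simp [hone]
  rw [ae_iff]
  exact hzero

lemma integrable_of_bound {f : (Fin n → ℝ) → ℝ}
    (hm : AEStronglyMeasurable f (Measure.pi D)) (C : ℝ)
    (hb : ∀ᵐ v ∂(Measure.pi D), |f v| ≤ C) : Integrable f (Measure.pi D) :=
  Integrable.mono' (integrable_const C) hm (by simpa [Real.norm_eq_abs] using hb)

lemma integral_abs_le {f : (Fin n → ℝ) → ℝ}
    (hm : AEStronglyMeasurable f (Measure.pi D)) (C : ℝ) (hC : 0 ≤ C)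
    (hb : ∀ᵐ v ∂(Measure.pi D), |f v| ≤ C) : |∫ v, f v ∂(Measure.pi D)| ≤ C := by
  have h1 : ‖∫ v, f v ∂(Measure.pi D)‖ ≤ ∫ v, ‖f v‖ ∂(Measure.pi D) :=
    norm_integral_le_integral_norm f
  have h2 : ∫ v, ‖f v‖ ∂(Measure.pi D) ≤ ∫ _v, C ∂(Measure.pi D) := by
    apply integral_mono_ae
    · exact (integrable_of_bound hm C hb).norm
    · exact integrable_const C
    · simp only [Real.norm_eq_abs]; exact hb
  rw [integral_const] at h2
  simp only [measure_univ, Measure.real, ENNReal.toReal_one, one_smul] at h2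
  simp only [Real.norm_eq_abs] at h1 h2
  linarith

lemma Ustar_nonneg (hsupp : ∀ i, D i (Set.Icc (0 : ℝ) vbar)ᶜ = 0)
    {U : Fin n → ℝ} (hU : U ∈ Ustar D vbar) (i : Fin n) : 0 ≤ U i := by
  obtain ⟨p, ⟨hpm, hps⟩, rfl⟩ := hU
  apply integral_nonneg_of_ae
  filter_upwards [pi_cube_ae hsupp] with v hv
  exact mul_nonneg (hv i).1 ((hps v hv).1 i)

lemma Ustar_le_vbar (hsupp : ∀ i, D i (Set.Icc (0 : ℝ) vbar)ᶜ = 0) (hv0 : 0 ≤ vbar)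
    {U : Fin n → ℝ} (hU : U ∈ Ustar D vbar) (i : Fin n) : U i ≤ vbar := by
  obtain ⟨p, ⟨hpm, hps⟩, rfl⟩ := hU
  have hmeas : AEStronglyMeasurable (fun v => v i * p v i) (Measure.pi D) :=
    ((measurable_pi_apply i).mul ((measurable_pi_apply i).comp hpm)).aestronglyMeasurable
  have hb : ∀ᵐ v ∂(Measure.pi D), v i * p v i ≤ vbar := by
    filter_upwards [pi_cube_ae hsupp] with v hv
    calc v i * p v i ≤ v i * 1 := by
          have h1 : p v i ≤ 1 := by
            have hsum := (hps v hv).2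
            have hnn := (hps v hv).1
            calc p v i ≤ ∑ j, p v j := Finset.single_le_sum (fun j _ => hnn j) (Finset.mem_univ i)
              _ ≤ 1 := hsum
          exact mul_le_mul_of_nonneg_left h1 (hv i).1
      _ = v i := mul_one _
      _ ≤ vbar := (hv i).2
  have hint : Integrable (fun v => v i * p v i) (Measure.pi D) := by
    apply integrable_of_bound hmeas (vbar * 1)
    filter_upwards [pi_cube_ae hsupp] with v hv
    rw [abs_mul]
    apply mul_le_mul
    · rw [abs_of_nonneg (hv i).1]; exact (hv i).2
    · rw [abs_of_nonneg ((hps v hv).1 i)]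
      have hsum := (hps v hv).2
      calc p v i ≤ ∑ j, p v j := Finset.single_le_sum (fun j _ => (hps v hv).1 j) (Finset.mem_univ i)
        _ ≤ 1 := hsum
    · exact abs_nonneg _
    · exact hv0
  have := integral_mono_ae hint (integrable_const vbar) hb
  rw [integral_const] at this
  simpa [measure_univ, realized] using this

end MeasureLayer

section Mechanism

variable {n : ℕ}

/-- interim allocation of the winner-take-all auction -/
noncomputable def Qf (D : Fin n → Measure ℝ) (h : Fin n → ℝ) (i : Fin n) : ℝ → ℝ :=
  fun b => interimFn D (alloc h) i b

/-- Myerson payment of agent `i` -/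
noncomputable def mh (D : Fin n → Measure ℝ) (h : Fin n → ℝ) (i : Fin n) : ℝ → ℝ :=
  mFun (Qf D h i)

noncomputable def Pset (h : Fin n → ℝ) : Finset (Fin n) := Finset.univ.filter (fun i => 0 < h i)

noncomputable def fin0 (n : ℕ) [NeZero n] : Fin n := ⟨0, Nat.pos_of_ne_zero (NeZero.ne n)⟩

noncomputable def istar (h : Fin n → ℝ) [NeZero n] : Fin n :=
  if hP : (Pset h).Nonempty then Classical.choose ((Pset h).exists_max_image h hP) else fin0 n

noncomputable def Pset' (h : Fin n → ℝ) [NeZero n] : Finset (Fin n) :=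
  (Pset h).erase (istar h)

noncomputable def kstar (h : Fin n → ℝ) [NeZero n] : Fin n :=
  if hP : (Pset' h).Nonempty then Classical.choose ((Pset' h).exists_max_image h hP) else fin0 n

/-- gift (hedging) part of the transfers -/
noncomputable def giftPart (D : Fin n → Measure ℝ) (h : Fin n → ℝ) [NeZero n]
    (v : Fin n → ℝ) (i : Fin n) : ℝ :=
  (if i = istar h then ∑ j ∈ Pset' h, (h j / h (istar h)) * mh D h j (v j) else 0)
  + (if (Pset' h).Nonempty ∧ i = kstar h then
      (h (istar h) / h (kstar h)) * mh D h (istar h) (v (istar h)) else 0)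

/-- transfer vector -/
noncomputable def Tfun (D : Fin n → Measure ℝ) (h : Fin n → ℝ) [NeZero n]
    (v : Fin n → ℝ) (i : Fin n) : ℝ :=
  -(mh D h i (v i)) + giftPart D h v i

variable {D : Fin n → Measure ℝ} [∀ i, IsProbabilityMeasure (D i)]

lemma istar_spec {h : Fin n → ℝ} [NeZero n] (hP : (Pset h).Nonempty) :
    istar h ∈ Pset h ∧ ∀ j ∈ Pset h, h j ≤ h (istar h) := by
  have := Classical.choose_spec ((Pset h).exists_max_image h hP)
  rw [istar, dif_pos hP]
  exact ⟨this.1, this.2⟩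

lemma kstar_spec {h : Fin n → ℝ} [NeZero n] (hP : (Pset' h).Nonempty) :
    kstar h ∈ Pset' h ∧ ∀ j ∈ Pset' h, h j ≤ h (kstar h) := by
  have := Classical.choose_spec ((Pset' h).exists_max_image h hP)
  rw [kstar, dif_pos hP]
  exact ⟨this.1, this.2⟩

lemma kstar_ne_istar {h : Fin n → ℝ} [NeZero n] (hP : (Pset' h).Nonempty) :
    kstar h ≠ istar h :=
  Finset.ne_of_mem_erase (kstar_spec hP).1

lemma istar_pos {h : Fin n → ℝ} [NeZero n] (hP : (Pset h).Nonempty) : 0 < h (istar h) :=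
  (Finset.mem_filter.1 (istar_spec hP).1).2

lemma kstar_pos {h : Fin n → ℝ} [NeZero n] (hP : (Pset' h).Nonempty) : 0 < h (kstar h) :=
  (Finset.mem_filter.1 (Finset.mem_of_mem_erase (kstar_spec hP).1)).2

lemma measurable_updateFn (i : Fin n) (b : ℝ) :
    Measurable (fun v : Fin n → ℝ => Function.update v i b) := by
  apply measurable_pi_lambda
  intro j
  by_cases hj : j = i
  · subst hj
    simp only [Function.update_self]
    exact measurable_const
  · have : ∀ v : Fin n → ℝ, Function.update v i b j = v j :=
      fun v => Function.update_of_ne hj _ _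
    simp only [this]
    exact measurable_pi_apply j

lemma alloc_update_integrable (h : Fin n → ℝ) (i : Fin n) (b : ℝ) :
    Integrable (fun v => alloc h (Function.update v i b) i) (Measure.pi D) := by
  apply integrable_of_bound
  · exact (((measurable_pi_apply i).comp (alloc_measurable h)).comp
      (measurable_updateFn i b)).aestronglyMeasurable
  · exact Filter.Eventually.of_forall fun v => by
      have h1 := alloc_nonneg h (Function.update v i b) i
      have h2 := alloc_le_one h (Function.update v i b) i
      rw [abs_le]; exact ⟨by linarith, h2⟩

lemma Qf_mono (h : Fin n → ℝ) (i : Fin n) : Monotone (Qf D h i) := by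
  intro b₁ b₂ hb
  exact integral_mono (alloc_update_integrable h i b₁) (alloc_update_integrable h i b₂)
    (fun v => alloc_mono h i v hb)

lemma Qf_nonneg (h : Fin n → ℝ) (i : Fin n) (b : ℝ) : 0 ≤ Qf D h i b :=
  integral_nonneg fun v => alloc_nonneg h _ i

lemma Qf_le_one (h : Fin n → ℝ) (i : Fin n) (b : ℝ) : Qf D h i b ≤ 1 := by
  have := integral_mono (alloc_update_integrable (D := D) h i b) (integrable_const 1)
    (fun v => alloc_le_one h _ i)
  simpa [integral_const, measure_univ, Qf, interimFn] using this

lemma mh_nonneg (h : Fin n → ℝ) (i : Fin n) {b : ℝ} (hb : 0 ≤ b) : 0 ≤ mh D h i b :=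
  mFun_nonneg (Qf_mono h i) hb

lemma mh_le (h : Fin n → ℝ) (i : Fin n) {b : ℝ} (hb : 0 ≤ b) : mh D h i b ≤ b :=
  mFun_le (Qf_nonneg h i) (Qf_le_one h i) hb

lemma mh_measurable (h : Fin n → ℝ) (i : Fin n) : Measurable (mh D h i) :=
  mFun_measurable (Qf_mono h i) (Qf_nonneg h i)

lemma mh_ic (h : Fin n → ℝ) (i : Fin n) (a b : ℝ) :
    a * Qf D h i b - mh D h i b ≤ a * Qf D h i a - mh D h i a :=
  myerson_ic (Qf_mono h i)

end Mechanism

section Mechanism2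

variable {n : ℕ} {D : Fin n → Measure ℝ} {vbar : ℝ} [∀ i, IsProbabilityMeasure (D i)]

lemma alloc_isAllocation (h : Fin n → ℝ) (vbar : ℝ) : IsAllocation vbar (alloc h) :=
  ⟨alloc_measurable h, fun v _ => alloc_mem_simplex h v⟩

/-- threshold above which the favored agent surely wins -/
noncomputable def theta (vbar : ℝ) (h : Fin n → ℝ) [NeZero n] : ℝ :=
  if (Pset' h).Nonempty then h (kstar h) * vbar / h (istar h) else 0

lemma theta_nonneg [NeZero n] {h : Fin n → ℝ} (hv0 : 0 ≤ vbar) : 0 ≤ theta vbar h := by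
  unfold theta
  split
  · next hne =>
    have hP : (Pset h).Nonempty := ⟨kstar h, Finset.mem_of_mem_erase (kstar_spec hne).1⟩
    exact div_nonneg (mul_nonneg (kstar_pos hne).le hv0) (istar_pos hP).le
  · exact le_refl 0

lemma Qf_istar_one [NeZero n] (hsupp : ∀ i, D i (Set.Icc (0 : ℝ) vbar)ᶜ = 0)
    (hv0 : 0 ≤ vbar)
    {h : Fin n → ℝ} (hP : (Pset h).Nonempty) {t : ℝ} (ht : theta vbar h < t) :
    Qf D h (istar h) t = 1 := by
  have hipos := istar_pos hP
  have htpos : 0 < t := lt_of_le_of_lt (theta_nonneg hv0) ht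
  have hae : ∀ᵐ v ∂(Measure.pi D),
      alloc h (Function.update v (istar h) t) (istar h) = 1 := by
    filter_upwards [pi_cube_ae hsupp] with v hv
    have hwin : winsAt h (istar h) (Function.update v (istar h) t) := by
      refine ⟨hipos, by simp [Function.update_self]; positivity, ?_⟩
      intro j hj hji
      have hjP : j ∈ Pset h := Finset.mem_filter.2 ⟨Finset.mem_univ j, hj⟩
      have hjP' : j ∈ Pset' h := Finset.mem_erase.2 ⟨hji, hjP⟩
      have hne : (Pset' h).Nonempty := ⟨j, hjP'⟩
      have hθ : theta vbar h = h (kstar h) * vbar / h (istar h) := if_pos hne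
      rw [hθ] at ht
      left
      rw [Function.update_of_ne hji, Function.update_self]
      have h1 : h j * v j ≤ h j * vbar := mul_le_mul_of_nonneg_left (hv j).2 hj.le
      have h2 : h j * vbar ≤ h (kstar h) * vbar := by
        have hvb : 0 ≤ vbar := le_trans (hv j).1 (hv j).2
        exact mul_le_mul_of_nonneg_right ((kstar_spec hne).2 j hjP') hvb
      have h3 : h (kstar h) * vbar < t * h (istar h) := by
        rw [div_lt_iff₀ hipos] at ht
        linarith
      calc h j * v j ≤ h (kstar h) * vbar := le_trans h1 h2
        _ < t * h (istar h) := h3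
        _ = h (istar h) * t := mul_comm _ _
    unfold alloc
    simp [hwin]
  unfold Qf interimFn
  rw [integral_congr_ae (hae.mono fun v hv => hv)]
  simp [integral_const, measure_univ]

lemma mh_istar_le_theta [NeZero n] (hsupp : ∀ i, D i (Set.Icc (0 : ℝ) vbar)ᶜ = 0)
    (hv0 : 0 ≤ vbar) {h : Fin n → ℝ} (hP : (Pset h).Nonempty) {b : ℝ} (hb : 0 ≤ b) :
    mh D h (istar h) b ≤ theta vbar h :=
  mFun_le_theta (Qf_mono h (istar h)) (Qf_nonneg h (istar h)) (Qf_le_one h (istar h))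
    (theta_nonneg hv0) hb (fun t hθ => Qf_istar_one hsupp hv0 hP hθ)

lemma mh_zero_of_nonpos {h : Fin n → ℝ} {i : Fin n} (hi : ¬ 0 < h i) (b : ℝ) :
    mh D h i b = 0 := by
  have hQ : ∀ t, Qf D h i t = 0 := by
    intro t
    unfold Qf interimFn
    have : ∀ v : Fin n → ℝ, alloc h (Function.update v i t) i = 0 := by
      intro v
      unfold alloc
      have : ¬ winsAt h i (Function.update v i t) := fun hw => hi hw.1
      simp [this]
    simp only [this]
    exact integral_zero _ _
  unfold mh mFun
  simp only [hQ]
  simp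

lemma mh_istar_zero_of_singleton [NeZero n] (hsupp : ∀ i, D i (Set.Icc (0 : ℝ) vbar)ᶜ = 0)
    (hv0 : 0 ≤ vbar) {h : Fin n → ℝ} (hP : (Pset h).Nonempty)
    (hP' : ¬ (Pset' h).Nonempty) {b : ℝ} (hb : 0 ≤ b) :
    mh D h (istar h) b = 0 := by
  have h1 := mh_istar_le_theta hsupp hv0 hP hb
  have h2 : theta vbar h = 0 := if_neg hP'
  have h3 := mh_nonneg (D := D) h (istar h) hb
  linarith [h1, h2 ▸ h1]

lemma gift_kstar_bounds [NeZero n] (hsupp : ∀ i, D i (Set.Icc (0 : ℝ) vbar)ᶜ = 0)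
    (hv0 : 0 ≤ vbar) {h : Fin n → ℝ} (hne : (Pset' h).Nonempty) {b : ℝ} (hb : 0 ≤ b) :
    0 ≤ h (istar h) / h (kstar h) * mh D h (istar h) b ∧
      h (istar h) / h (kstar h) * mh D h (istar h) b ≤ vbar := by
  have hP : (Pset h).Nonempty := ⟨kstar h, Finset.mem_of_mem_erase (kstar_spec hne).1⟩
  have hipos := istar_pos hP
  have hkpos := kstar_pos hne
  constructor
  · exact mul_nonneg (div_nonneg hipos.le hkpos.le) (mh_nonneg h (istar h) hb)
  · have h1 := mh_istar_le_theta hsupp hv0 hP hb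
    have hθ : theta vbar h = h (kstar h) * vbar / h (istar h) := if_pos hne
    rw [hθ] at h1
    have h2 : h (istar h) / h (kstar h) * mh D h (istar h) b ≤
        h (istar h) / h (kstar h) * (h (kstar h) * vbar / h (istar h)) :=
      mul_le_mul_of_nonneg_left h1 (div_nonneg hipos.le hkpos.le)
    calc h (istar h) / h (kstar h) * mh D h (istar h) b
        ≤ h (istar h) / h (kstar h) * (h (kstar h) * vbar / h (istar h)) := h2
      _ = vbar := by field_simp
      
lemma card_Pset'_le [NeZero n] (h : Fin n → ℝ) : (Pset' h).card ≤ n - 1 := by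
  have h1 : Pset' h ⊆ Finset.univ.erase (istar h) :=
    Finset.erase_subset_erase _ (Finset.subset_univ _)
  calc (Pset' h).card ≤ (Finset.univ.erase (istar h)).card := Finset.card_le_card h1
    _ = n - 1 := by rw [Finset.card_erase_of_mem (Finset.mem_univ _)]; simp

lemma Tfun_bound (hn : 2 ≤ n) [NeZero n] (hsupp : ∀ i, D i (Set.Icc (0 : ℝ) vbar)ᶜ = 0)
    (hv0 : 0 ≤ vbar) {h : Fin n → ℝ} {v : Fin n → ℝ} (hv : v ∈ cube n vbar) (i : Fin n) :
    |Tfun D h v i| ≤ (if i = istar h then ((n:ℝ) - 1) * vbar else vbar) := by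
  have hvb : ∀ j, 0 ≤ v j ∧ v j ≤ vbar := fun j => ⟨(hv j).1, (hv j).2⟩
  have hm0 : ∀ j, 0 ≤ mh D h j (v j) := fun j => mh_nonneg h j (hvb j).1
  have hmv : ∀ j, mh D h j (v j) ≤ vbar := fun j => (mh_le h j (hvb j).1).trans (hvb j).2
  have hn1 : (1:ℝ) ≤ (n:ℝ) - 1 := by
    have : (2:ℝ) ≤ (n:ℝ) := by exact_mod_cast hn
    linarith
  by_cases hi : i = istar h
  · rw [if_pos hi]
    set S := ∑ j ∈ Pset' h, (h j / h (istar h)) * mh D h j (v j) with hS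
    have hthird : (if (Pset' h).Nonempty ∧ i = kstar h then
        h (istar h) / h (kstar h) * mh D h (istar h) (v (istar h)) else 0) = 0 := by
      apply if_neg
      rintro ⟨hne, hik⟩
      exact kstar_ne_istar hne (hik.symm.trans hi)
    have hT : Tfun D h v i = -(mh D h i (v i)) + S := by
      unfold Tfun giftPart
      rw [if_pos hi, hthird]
      ring
    have hS0 : 0 ≤ S := by
      apply Finset.sum_nonneg
      intro j hj
      have hjP := Finset.mem_of_mem_erase hj
      have hP : (Pset h).Nonempty := ⟨j, hjP⟩
      exact mul_nonneg (div_nonneg (Finset.mem_filter.1 hjP).2.le (istar_pos hP).le)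
        (hm0 j)
    have hSle : S ≤ ((n:ℝ) - 1) * vbar := by
      have hterm : ∀ j ∈ Pset' h, (h j / h (istar h)) * mh D h j (v j) ≤ vbar := by
        intro j hj
        have hjP := Finset.mem_of_mem_erase hj
        have hP : (Pset h).Nonempty := ⟨j, hjP⟩
        have hw1 : h j / h (istar h) ≤ 1 :=
          (div_le_one (istar_pos hP)).2 ((istar_spec hP).2 j hjP)
        have hw0 : 0 ≤ h j / h (istar h) :=
          div_nonneg (Finset.mem_filter.1 hjP).2.le (istar_pos hP).le
        calc (h j / h (istar h)) * mh D h j (v j) ≤ 1 * vbar :=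
              mul_le_mul hw1 (hmv j) (hm0 j) one_pos.le
          _ = vbar := one_mul _
      calc S ≤ ∑ _j ∈ Pset' h, vbar := Finset.sum_le_sum hterm
        _ = ((Pset' h).card : ℝ) * vbar := by rw [Finset.sum_const, nsmul_eq_mul]
        _ ≤ ((n:ℝ) - 1) * vbar := by
            apply mul_le_mul_of_nonneg_right _ hv0
            have hcard := card_Pset'_le h
            have : ((Pset' h).card : ℝ) ≤ ((n - 1 : ℕ) : ℝ) := by exact_mod_cast hcard
            rwa [Nat.cast_sub (by omega), Nat.cast_one] at this
    have hvbn : vbar ≤ ((n:ℝ) - 1) * vbar := by nlinarith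
    rw [hT, abs_le]
    constructor
    · have := hm0 i
      have := hmv i
      linarith
    · have := hm0 i
      linarith
  · rw [if_neg hi]
    have hfirst : (if i = istar h then
        ∑ j ∈ Pset' h, (h j / h (istar h)) * mh D h j (v j) else 0) = 0 := if_neg hi
    by_cases hc : (Pset' h).Nonempty ∧ i = kstar h
    · have hg := gift_kstar_bounds hsupp hv0 hc.1 (hvb (istar h)).1
      have hT : Tfun D h v i = -(mh D h i (v i))
          + h (istar h) / h (kstar h) * mh D h (istar h) (v (istar h)) := by
        unfold Tfun giftPart
        rw [hfirst, if_pos hc]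
        ring
      rw [hT, abs_le]
      constructor
      · have := hmv i
        linarith [hg.1]
      · have := hm0 i
        linarith [hg.2]
    · have hT : Tfun D h v i = -(mh D h i (v i)) := by
        unfold Tfun giftPart
        rw [hfirst, if_neg hc]
        ring
      rw [hT, abs_le]
      constructor
      · have := hmv i
        linarith
      · have := hm0 i
        linarith

end Mechanism2

section Mechanism3

variable {n : ℕ} {D : Fin n → Measure ℝ} {vbar : ℝ} [∀ i, IsProbabilityMeasure (D i)]

lemma hedge_zero [NeZero n] (hsupp : ∀ i, D i (Set.Icc (0 : ℝ) vbar)ᶜ = 0)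
    (hv0 : 0 ≤ vbar) {h : Fin n → ℝ} {v : Fin n → ℝ} (hv : v ∈ cube n vbar) :
    ∑ i, h i * Tfun D h v i = 0 := by
  have hsplit : ∑ i, h i * Tfun D h v i =
      (∑ i, h i * (-(mh D h i (v i)))) + ∑ i, h i * giftPart D h v i := by
    rw [← Finset.sum_add_distrib]
    apply Finset.sum_congr rfl
    intro i _
    unfold Tfun
    ring
  by_cases hP : (Pset h).Nonempty
  · have hi0 := (istar_spec hP).1
    have hipos := istar_pos hP
    -- first summand restricted to Pset
    have hsum1 : ∑ i, h i * (-(mh D h i (v i))) =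
        -(∑ i ∈ Pset h, h i * mh D h i (v i)) := by
      rw [← Finset.sum_neg_distrib]
      rw [← Finset.sum_subset (Finset.subset_univ (Pset h))]
      · apply Finset.sum_congr rfl; intro i _; ring
      · intro i _ hi
        have : ¬ 0 < h i := by
          intro hc; exact hi (Finset.mem_filter.2 ⟨Finset.mem_univ i, hc⟩)
        rw [mh_zero_of_nonpos this]
        ring
    have hsum1' : ∑ i ∈ Pset h, h i * mh D h i (v i) =
        h (istar h) * mh D h (istar h) (v (istar h))
          + ∑ i ∈ Pset' h, h i * mh D h i (v i) := by
      rw [← Finset.add_sum_erase _ _ hi0]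
      rfl
    -- second summand
    have hsum2 : ∑ i, h i * giftPart D h v i =
        h (istar h) * (∑ j ∈ Pset' h, (h j / h (istar h)) * mh D h j (v j))
          + (if (Pset' h).Nonempty then
              h (kstar h) * (h (istar h) / h (kstar h) * mh D h (istar h) (v (istar h)))
            else 0) := by
      unfold giftPart
      rw [Finset.sum_congr rfl (fun i (_ : i ∈ Finset.univ) => mul_add (h i) _ _)]
      rw [Finset.sum_add_distrib]
      congr 1
      · rw [Finset.sum_congr rfl (fun i (_ : i ∈ Finset.univ) => mul_ite _ _ _ _)]
        simp only [mul_zero]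
        rw [Finset.sum_ite_eq' Finset.univ (istar h)]
        simp
      · by_cases hne : (Pset' h).Nonempty
        · rw [if_pos hne]
          have : ∀ i : Fin n, (h i * if (Pset' h).Nonempty ∧ i = kstar h then
              h (istar h) / h (kstar h) * mh D h (istar h) (v (istar h)) else 0)
              = if i = kstar h then
                  h i * (h (istar h) / h (kstar h) * mh D h (istar h) (v (istar h)))
                else 0 := by
            intro i
            by_cases hik : i = kstar h
            · simp [hik, hne]
            · simp [hik]
          rw [Finset.sum_congr rfl (fun i _ => this i)]
          rw [Finset.sum_ite_eq' Finset.univ (kstar h)]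
          simp
        · rw [if_neg hne]
          apply Finset.sum_eq_zero
          intro i _
          have : ¬ ((Pset' h).Nonempty ∧ i = kstar h) := fun hc => hne hc.1
          simp [this]
    have hgift1 : h (istar h) * (∑ j ∈ Pset' h, (h j / h (istar h)) * mh D h j (v j)) =
        ∑ j ∈ Pset' h, h j * mh D h j (v j) := by
      rw [Finset.mul_sum]
      apply Finset.sum_congr rfl
      intro j _
      field_simp
    by_cases hne : (Pset' h).Nonempty
    · have hkpos := kstar_pos hne
      have hgift2 : h (kstar h) * (h (istar h) / h (kstar h) * mh D h (istar h) (v (istar h)))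
          = h (istar h) * mh D h (istar h) (v (istar h)) := by
        field_simp
      rw [hsplit, hsum1, hsum1', hsum2, if_pos hne, hgift1, hgift2]
      ring
    · have hmz : mh D h (istar h) (v (istar h)) = 0 :=
        mh_istar_zero_of_singleton hsupp hv0 hP hne (hv (istar h)).1
      have hP'e : Pset' h = ∅ := Finset.not_nonempty_iff_eq_empty.1 hne
      rw [hsplit, hsum1, hsum1', hsum2, if_neg hne, hgift1, hmz, hP'e]
      simp
  · have hPe : Pset h = ∅ := Finset.not_nonempty_iff_eq_empty.1 hP
    have hmz : ∀ i, mh D h i (v i) = 0 := by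
      intro i
      apply mh_zero_of_nonpos
      intro hc
      have : i ∈ Pset h := Finset.mem_filter.2 ⟨Finset.mem_univ i, hc⟩
      rw [hPe] at this
      exact absurd this (Finset.notMem_empty i)
    have hP'e : Pset' h = ∅ := by
      unfold Pset'
      rw [hPe]
      rfl
    apply Finset.sum_eq_zero
    intro i _
    unfold Tfun giftPart
    rw [hmz i, hP'e]
    have : ¬ ((∅ : Finset (Fin n)).Nonempty ∧ i = kstar h) := by
      rintro ⟨hc, _⟩
      exact absurd hc (by simp)
    simp [this]

lemma Tfun_measurable [NeZero n] (h : Fin n → ℝ) (i : Fin n) :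
    Measurable (fun v => Tfun D h v i) := by
  unfold Tfun giftPart
  apply Measurable.add
  · exact ((mh_measurable h i).comp (measurable_pi_apply i)).neg
  · apply Measurable.add
    · by_cases hi : i = istar h
      · simp only [hi, if_true]
        apply Finset.measurable_sum
        intro j _
        exact ((mh_measurable h j).comp (measurable_pi_apply j)).const_mul _
      · simp only [hi, if_false]
        exact measurable_const
    · by_cases hc : (Pset' h).Nonempty ∧ i = kstar h
      · simp only [hc, if_true]
        exact ((mh_measurable h (istar h)).comp (measurable_pi_apply (istar h))).const_mul _
      · simp only [hc, if_false]
        exact measurable_const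

lemma Tfun_integrable (hn : 2 ≤ n) [NeZero n]
    (hsupp : ∀ i, D i (Set.Icc (0 : ℝ) vbar)ᶜ = 0) (hv0 : 0 ≤ vbar)
    (h : Fin n → ℝ) (i : Fin n) :
    Integrable (fun v => Tfun D h v i) (Measure.pi D) := by
  apply integrable_of_bound (Tfun_measurable h i).aestronglyMeasurable (((n:ℝ) - 1) * vbar)
  filter_upwards [pi_cube_ae hsupp] with v hv
  have := Tfun_bound hn hsupp hv0 (h := h) hv i
  have hvbn : vbar ≤ ((n:ℝ) - 1) * vbar := by
    have : (2:ℝ) ≤ (n:ℝ) := by exact_mod_cast hn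
    nlinarith
  by_cases hi : i = istar h
  · rwa [if_pos hi] at this
  · rw [if_neg hi] at this
    linarith

lemma giftPart_update [NeZero n] (h : Fin n → ℝ) (v : Fin n → ℝ) (i : Fin n) (b : ℝ) :
    giftPart D h (Function.update v i b) i = giftPart D h v i := by
  unfold giftPart
  congr 1
  · by_cases hi : i = istar h
    · rw [if_pos hi, if_pos hi]
      apply Finset.sum_congr rfl
      intro j hj
      have hji : j ≠ i := by
        intro hc
        subst hc
        exact (Finset.mem_erase.1 hj).1 hi
      rw [Function.update_of_ne hji]
    · rw [if_neg hi, if_neg hi]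
  · by_cases hc : (Pset' h).Nonempty ∧ i = kstar h
    · rw [if_pos hc, if_pos hc]
      have hne : istar h ≠ i := by
        intro hcc
        exact kstar_ne_istar hc.1 ((hc.2.symm.trans hcc.symm).symm).symm
      rw [Function.update_of_ne hne]
    · rw [if_neg hc, if_neg hc]

lemma Tfun_update [NeZero n] (h : Fin n → ℝ) (v : Fin n → ℝ) (i : Fin n) (b : ℝ) :
    Tfun D h (Function.update v i b) i = -(mh D h i b) + giftPart D h v i := by
  unfold Tfun
  rw [giftPart_update]
  congr 2
  rw [Function.update_self]

end Mechanism3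

section Drift

variable {n : ℕ} {D : Fin n → Measure ℝ} {vbar : ℝ} [∀ i, IsProbabilityMeasure (D i)]

lemma integrable_vp (hsupp : ∀ i, D i (Set.Icc (0 : ℝ) vbar)ᶜ = 0) (hv0 : 0 ≤ vbar)
    {p : (Fin n → ℝ) → (Fin n → ℝ)} (hp : IsAllocation vbar p) (i : Fin n) :
    Integrable (fun v => v i * p v i) (Measure.pi D) := by
  obtain ⟨hpm, hps⟩ := hp
  apply integrable_of_bound
    (((measurable_pi_apply i).mul ((measurable_pi_apply i).comp hpm)).aestronglyMeasurable) vbar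
  filter_upwards [pi_cube_ae hsupp] with v hv
  show |v i * p v i| ≤ vbar
  rw [abs_mul]
  have hp1 : p v i ≤ 1 := by
    calc p v i ≤ ∑ j, p v j :=
          Finset.single_le_sum (fun j _ => (hps v hv).1 j) (Finset.mem_univ i)
      _ ≤ 1 := (hps v hv).2
  calc |v i| * |p v i| ≤ vbar * 1 := by
        apply mul_le_mul
        · rw [abs_of_nonneg (hv i).1]; exact (hv i).2
        · rw [abs_of_nonneg ((hps v hv).1 i)]; exact hp1
        · exact abs_nonneg _
        · exact hv0
    _ = vbar := mul_one _

lemma weighted_realized (hsupp : ∀ i, D i (Set.Icc (0 : ℝ) vbar)ᶜ = 0) (hv0 : 0 ≤ vbar)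
    {p : (Fin n → ℝ) → (Fin n → ℝ)} (hp : IsAllocation vbar p) (h : Fin n → ℝ) :
    ∑ i, h i * realized D p i = ∫ v, ∑ i, h i * (v i * p v i) ∂(Measure.pi D) := by
  rw [integral_finset_sum]
  · apply Finset.sum_congr rfl
    intro i _
    unfold realized
    exact (integral_const_mul _ _).symm
  · intro i _
    exact (integrable_vp hsupp hv0 hp i).const_mul _

lemma weighted_realized_le (hsupp : ∀ i, D i (Set.Icc (0 : ℝ) vbar)ᶜ = 0) (hv0 : 0 ≤ vbar)
    {p : (Fin n → ℝ) → (Fin n → ℝ)} (hp : IsAllocation vbar p) (h : Fin n → ℝ) :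
    ∑ i, h i * realized D p i ≤ ∑ i, h i * realized D (alloc h) i := by
  rw [weighted_realized hsupp hv0 hp h,
    weighted_realized hsupp hv0 (alloc_isAllocation h vbar) h]
  apply integral_mono_ae
  · have := (integrable_vp hsupp hv0 hp)
    exact integrable_finset_sum _ (fun i _ => (this i).const_mul _)
  · have := (integrable_vp hsupp hv0 (alloc_isAllocation h vbar))
    exact integrable_finset_sum _ (fun i _ => (this i).const_mul _)
  · filter_upwards [pi_cube_ae hsupp] with v hv
    have h1 := alloc_opt h v (fun i => (hv i).1) (hp.2 v hv)
    calc ∑ i, h i * (v i * p v i) = ∑ i, h i * v i * p v i := by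
          apply Finset.sum_congr rfl; intro i _; ring
      _ ≤ ∑ i, h i * v i * alloc h v i := h1
      _ = ∑ i, h i * (v i * alloc h v i) := by
          apply Finset.sum_congr rfl; intro i _; ring

lemma realized_alloc_zero (hP : Pset h = ∅) (i : Fin n) :
    realized D (alloc h) i = 0 := by
  unfold realized
  have hz : ∀ v : Fin n → ℝ, v i * alloc h v i = 0 := by
    intro v
    have : ¬ winsAt h i v := by
      intro hw
      have : i ∈ Pset h := Finset.mem_filter.2 ⟨Finset.mem_univ i, hw.1⟩
      rw [hP] at this
      exact absurd this (Finset.notMem_empty i)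
    unfold alloc
    simp [this]
  simp only [hz]
  exact integral_zero _ _

lemma l2_le_l1 (a : Fin n → ℝ) : Real.sqrt (∑ i, (a i)^2) ≤ ∑ i, |a i| := by
  have h1 : ∑ i, (a i)^2 ≤ (∑ i, |a i|)^2 := by
    have hterm : ∀ i : Fin n, (a i)^2 ≤ |a i| * ∑ j, |a j| := by
      intro i
      have h2 : |a i| ≤ ∑ j, |a j| :=
        Finset.single_le_sum (fun j _ => abs_nonneg (a j)) (Finset.mem_univ i)
      calc (a i)^2 = |a i| * |a i| := by rw [← sq_abs (a i)]; ring
        _ ≤ |a i| * ∑ j, |a j| := mul_le_mul_of_nonneg_left h2 (abs_nonneg _)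
    calc ∑ i, (a i)^2 ≤ ∑ i, |a i| * ∑ j, |a j| := Finset.sum_le_sum (fun i _ => hterm i)
      _ = (∑ i, |a i|) * (∑ j, |a j|) := by rw [← Finset.sum_mul]
      _ = (∑ i, |a i|)^2 := by ring
  calc Real.sqrt (∑ i, (a i)^2) ≤ Real.sqrt ((∑ i, |a i|)^2) := Real.sqrt_le_sqrt h1
    _ = ∑ i, |a i| := Real.sqrt_sq (Finset.sum_nonneg (fun i _ => abs_nonneg _))

lemma euclDist_sq (x y : Fin n → ℝ) : (euclDist x y)^2 = ∑ i, (x i - y i)^2 :=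
  Real.sq_sqrt (Finset.sum_nonneg (fun i _ => sq_nonneg _))

lemma euclDist_nonneg (x y : Fin n → ℝ) : 0 ≤ euclDist x y := Real.sqrt_nonneg _

lemma euclDist_ray (x h : Fin n → ℝ) {c : ℝ} (hc : 0 ≤ c) :
    euclDist x (fun i => x i + c * h i) = c * Real.sqrt (∑ i, (h i)^2) := by
  unfold euclDist
  have : ∀ i : Fin n, (x i - (x i + c * h i))^2 = c^2 * (h i)^2 := by
    intro i; ring
  rw [Finset.sum_congr rfl (fun i _ => this i), ← Finset.mul_sum,
    Real.sqrt_mul (sq_nonneg c), Real.sqrt_sq hc]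

lemma euclDist_update (x : Fin n → ℝ) (i : Fin n) {c : ℝ} (hc : 0 ≤ c) :
    euclDist x (Function.update x i (x i - c)) = c := by
  unfold euclDist
  have hterm : ∀ j : Fin n, (x j - Function.update x i (x i - c) j)^2 =
      if j = i then c^2 else 0 := by
    intro j
    by_cases hj : j = i
    · subst hj
      rw [Function.update_self]
      simp only [eq_self_iff_true, if_true]
      ring
    · rw [Function.update_of_ne hj]
      simp [hj]
  rw [Finset.sum_congr rfl (fun j _ => hterm j), Finset.sum_ite_eq' Finset.univ i]
  simp [Real.sqrt_sq hc]

end Drift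

section Wmech

variable {n : ℕ} {D : Fin n → Measure ℝ} {vbar : ℝ} [∀ i, IsProbabilityMeasure (D i)]

/-- direction vector -/
def hdir (x U : Fin n → ℝ) : Fin n → ℝ := fun j => U j - x j

/-- gross flow vector of the direction mechanism -/
noncomputable def zAll (D : Fin n → Measure ℝ) (x U : Fin n → ℝ) : Fin n → ℝ :=
  realized D (alloc (hdir x U))

/-- expected transfers -/
noncomputable def ETv (D : Fin n → Measure ℝ) (x U : Fin n → ℝ) [NeZero n] : Fin n → ℝ :=
  fun i => ∫ w, Tfun D (hdir x U) w i ∂(Measure.pi D)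

/-- the continuation promise mechanism -/
noncomputable def Wmech (D : Fin n → Measure ℝ) (γ : ℝ) (x U : Fin n → ℝ) [NeZero n] :
    (Fin n → ℝ) → Fin n → ℝ :=
  fun v i => (U i - (1 - γ) * zAll D x U i) / γ
    + ((1 - γ)/γ) * (Tfun D (hdir x U) v i - ETv D x U i)

lemma Wmech_measurable [NeZero n] (γ : ℝ) (x U : Fin n → ℝ) :
    Measurable (Wmech D γ x U) := by
  apply measurable_pi_lambda
  intro i
  apply Measurable.add measurable_const
  exact (((Tfun_measurable (hdir x U) i).sub measurable_const).const_mul _)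

lemma mh_comp_integrable (hsupp : ∀ i, D i (Set.Icc (0 : ℝ) vbar)ᶜ = 0) (hv0 : 0 ≤ vbar)
    (h : Fin n → ℝ) (i : Fin n) :
    Integrable (fun v : Fin n → ℝ => mh D h i (v i)) (Measure.pi D) := by
  apply integrable_of_bound ((mh_measurable h i).comp (measurable_pi_apply i)).aestronglyMeasurable vbar
  filter_upwards [pi_cube_ae hsupp] with v hv
  simp only [Function.comp_apply]
  rw [abs_of_nonneg (mh_nonneg h i (hv i).1)]
  exact (mh_le h i (hv i).1).trans (hv i).2

lemma giftPart_integrable (hn : 2 ≤ n) [NeZero n]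
    (hsupp : ∀ i, D i (Set.Icc (0 : ℝ) vbar)ᶜ = 0) (hv0 : 0 ≤ vbar)
    (h : Fin n → ℝ) (i : Fin n) :
    Integrable (fun v : Fin n → ℝ => giftPart D h v i) (Measure.pi D) := by
  have heq : (fun v : Fin n → ℝ => giftPart D h v i)
      = fun v => Tfun D h v i + mh D h i (v i) := by
    funext v
    unfold Tfun
    ring
  rw [heq]
  exact (Tfun_integrable hn hsupp hv0 h i).add (mh_comp_integrable hsupp hv0 h i)

lemma ETv_bound (hn : 2 ≤ n) [NeZero n]
    (hsupp : ∀ i, D i (Set.Icc (0 : ℝ) vbar)ᶜ = 0) (hv0 : 0 ≤ vbar)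
    (x U : Fin n → ℝ) (i : Fin n) :
    |ETv D x U i| ≤ (if i = istar (hdir x U) then ((n:ℝ) - 1) * vbar else vbar) := by
  have hB0 : 0 ≤ (if i = istar (hdir x U) then ((n:ℝ) - 1) * vbar else vbar) := by
    have h2 : (2:ℝ) ≤ (n:ℝ) := by exact_mod_cast hn
    split <;> nlinarith
  apply integral_abs_le (Tfun_measurable (hdir x U) i).aestronglyMeasurable _ hB0
  filter_upwards [pi_cube_ae hsupp] with v hv
  exact Tfun_bound hn hsupp hv0 hv i

lemma Wcoord_integrable (hn : 2 ≤ n) [NeZero n]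
    (hsupp : ∀ i, D i (Set.Icc (0 : ℝ) vbar)ᶜ = 0) (hv0 : 0 ≤ vbar)
    (γ : ℝ) (x U : Fin n → ℝ) (i : Fin n) :
    Integrable (fun v => Wmech D γ x U v i) (Measure.pi D) := by
  unfold Wmech
  have hint2 : Integrable (fun v => (1 - γ)/γ * (Tfun D (hdir x U) v i - ETv D x U i))
      (Measure.pi D) :=
    ((Tfun_integrable hn hsupp hv0 (hdir x U) i).sub (integrable_const _)).const_mul _
  exact (integrable_const _).add hint2

lemma Wmech_integral (hn : 2 ≤ n) [NeZero n]
    (hsupp : ∀ i, D i (Set.Icc (0 : ℝ) vbar)ᶜ = 0) (hv0 : 0 ≤ vbar)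
    (γ : ℝ) (x U : Fin n → ℝ) (i : Fin n) :
    ∫ v, Wmech D γ x U v i ∂(Measure.pi D) = (U i - (1 - γ) * zAll D x U i) / γ := by
  unfold Wmech
  have hint2 : Integrable (fun v => (1 - γ)/γ * (Tfun D (hdir x U) v i - ETv D x U i))
      (Measure.pi D) :=
    ((Tfun_integrable hn hsupp hv0 (hdir x U) i).sub (integrable_const _)).const_mul _
  rw [integral_add (integrable_const _) hint2]
  rw [integral_const]
  simp only [measure_univ, Measure.real, ENNReal.toReal_one, one_smul]
  rw [integral_const_mul, integral_sub (Tfun_integrable hn hsupp hv0 (hdir x U) i)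
    (integrable_const _)]
  rw [integral_const]
  simp only [measure_univ, Measure.real, ENNReal.toReal_one, one_smul]
  have : ∫ v, Tfun D (hdir x U) v i ∂(Measure.pi D) = ETv D x U i := rfl
  rw [this]
  ring

lemma promise_keeping (hn : 2 ≤ n) [NeZero n]
    (hsupp : ∀ i, D i (Set.Icc (0 : ℝ) vbar)ᶜ = 0) (hv0 : 0 ≤ vbar)
    {γ : ℝ} (hγ0 : γ ≠ 0) (x U : Fin n → ℝ) (i : Fin n) :
    U i = ∫ v, ((1 - γ) * (v i * alloc (hdir x U) v i) + γ * Wmech D γ x U v i)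
      ∂(Measure.pi D) := by
  rw [integral_add
    ((integrable_vp hsupp hv0 (alloc_isAllocation (hdir x U) vbar) i).const_mul _)
    ((Wcoord_integrable hn hsupp hv0 γ x U i).const_mul _)]
  rw [integral_const_mul, integral_const_mul, Wmech_integral hn hsupp hv0 γ x U i]
  have hz : ∫ v, v i * alloc (hdir x U) v i ∂(Measure.pi D) = zAll D x U i := rfl
  rw [hz]
  field_simp
  ring

lemma interim_W_form (hn : 2 ≤ n) [NeZero n]
    (hsupp : ∀ i, D i (Set.Icc (0 : ℝ) vbar)ᶜ = 0) (hv0 : 0 ≤ vbar)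
    (γ : ℝ) (x U : Fin n → ℝ) (i : Fin n) :
    ∃ c0 : ℝ, ∀ b : ℝ, interimFn D (Wmech D γ x U) i b
      = c0 - ((1 - γ)/γ) * mh D (hdir x U) i b := by
  set h := hdir x U with hhdef
  refine ⟨(U i - (1 - γ) * zAll D x U i) / γ - ((1 - γ)/γ) * ETv D x U i
    + ((1 - γ)/γ) * ∫ v, giftPart D h v i ∂(Measure.pi D), ?_⟩
  intro b
  unfold interimFn
  have hW : ∀ v : Fin n → ℝ, Wmech D γ x U (Function.update v i b) i =
      ((U i - (1 - γ) * zAll D x U i) / γ - ((1 - γ)/γ) * ETv D x U i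
        - ((1 - γ)/γ) * mh D h i b) + ((1 - γ)/γ) * giftPart D h v i := by
    intro v
    unfold Wmech
    rw [← hhdef, Tfun_update]
    ring
  simp only [hW]
  rw [integral_add (integrable_const _)
    ((giftPart_integrable hn hsupp hv0 h i).const_mul _)]
  rw [integral_const]
  simp only [measure_univ, Measure.real, ENNReal.toReal_one, one_smul]
  rw [integral_const_mul]
  ring

lemma quad_bound {u r δ s K : ℝ} (hu0 : 0 ≤ u) (hur : u ≤ r) (hr : 0 < r)
    (hF1 : s * K ≤ 2 * r * δ) (hF2 : s^2 * K ≤ (1 - s)^2 * r^2) (hs0 : 0 < s) :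
    u^2 - 2*s*u*(r+δ) + s^2*K ≤ (1 - s)^2 * r^2 := by
  set ψr := -2*s*r*δ + s^2*K - s^2*r^2 with hψr_def
  set ψ0 := s^2*K - (1-s)^2*r^2 with hψ0_def
  have hψr : ψr ≤ 0 := by
    have : s * (s * K) ≤ s * (2 * r * δ) := mul_le_mul_of_nonneg_left hF1 hs0.le
    have hsr : 0 ≤ s^2 * r^2 := by positivity
    nlinarith
  have hψ0 : ψ0 ≤ 0 := by rw [hψ0_def]; linarith
  have hkey : r * (u^2 - 2*s*u*(r+δ) + s^2*K - (1-s)^2*r^2)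
      = u * ψr + (r - u) * ψ0 + r * u * (u - r) := by
    rw [hψr_def, hψ0_def]; ring
  have h1 : u * ψr ≤ 0 := mul_nonpos_iff.2 (Or.inl ⟨hu0, hψr⟩)
  have h2 : (r - u) * ψ0 ≤ 0 := mul_nonpos_iff.2 (Or.inl ⟨by linarith, hψ0⟩)
  have h3 : r * u * (u - r) ≤ 0 :=
    mul_nonpos_iff.2 (Or.inl ⟨mul_nonneg hr.le hu0, by linarith⟩)
  nlinarith [hkey, h1, h2, h3, hr]

end Wmech

section Validity

variable {n : ℕ} {D : Fin n → Measure ℝ} {vbar : ℝ} [∀ i, IsProbabilityMeasure (D i)]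

lemma drift_bound (hn : 2 ≤ n) [NeZero n]
    (hsupp : ∀ i, D i (Set.Icc (0 : ℝ) vbar)ᶜ = 0) (hv0 : 0 ≤ vbar)
    {r δ : ℝ} {x : Fin n → ℝ} (hr : 0 < r) (hδ : 0 < δ)
    (hball : euclBall x (r + δ) ⊆ Ustar D vbar)
    (hxl : ∀ i, r + δ ≤ x i)
    (U : Fin n → ℝ) :
    (r + δ) * euclDist x U ≤ ∑ i, hdir x U i * (zAll D x U i - x i) := by
  set h := hdir x U with hhd
  set u := euclDist x U with hu
  have hu0 : 0 ≤ u := euclDist_nonneg x U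
  have hu2 : u^2 = ∑ i, (h i)^2 := by
    rw [hu, euclDist_sq]
    apply Finset.sum_congr rfl
    intro i _
    have : h i = U i - x i := rfl
    rw [this]; ring
  have hrδ : 0 < r + δ := by linarith
  have hsplit : ∑ i, h i * (zAll D x U i - x i)
      = ∑ i, h i * zAll D x U i - ∑ i, h i * x i := by
    rw [← Finset.sum_sub_distrib]
    apply Finset.sum_congr rfl
    intro i _; ring
  by_cases hP : (Pset h).Nonempty
  · -- competitive case : compare with the ball point in direction h
    have hupos : 0 < u := by
      obtain ⟨i0, hi0⟩ := hP
      have hpos : 0 < h i0 := (Finset.mem_filter.1 hi0).2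
      have : (h i0)^2 ≤ ∑ i, (h i)^2 :=
        Finset.single_le_sum (fun i _ => sq_nonneg (h i)) (Finset.mem_univ i0)
      have hu2pos : 0 < u^2 := by rw [hu2]; nlinarith
      by_contra hc
      push_neg at hc
      have : u = 0 := le_antisymm hc hu0
      rw [this] at hu2pos; norm_num at hu2pos
    set c := (r + δ)/u with hc
    have hc0 : 0 ≤ c := div_nonneg hrδ.le hu0
    set y : Fin n → ℝ := fun j => x j + c * h j with hy
    have hyball : y ∈ euclBall x (r + δ) := by
      show euclDist x y ≤ r + δ
      rw [hy, euclDist_ray x h hc0]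
      have husqrt : Real.sqrt (∑ i, (h i)^2) = u := by
        rw [← hu2, Real.sqrt_sq hu0]
      rw [husqrt, hc]
      rw [div_mul_cancel₀ _ (ne_of_gt hupos)]
    obtain ⟨p, hp, hyre⟩ := hball hyball
    have h1 : ∑ i, h i * y i ≤ ∑ i, h i * zAll D x U i := by
      have := weighted_realized_le hsupp hv0 hp h
      rw [← hyre] at this
      exact this
    have h2 : ∑ i, h i * y i = ∑ i, h i * x i + (r + δ) * u := by
      rw [hy]
      have : ∀ i : Fin n, h i * (x i + c * h i) = h i * x i + c * (h i)^2 := by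
        intro i; ring
      rw [Finset.sum_congr rfl (fun i _ => this i), Finset.sum_add_distrib,
        ← Finset.mul_sum, ← hu2, hc]
      have : (r + δ) / u * u^2 = (r + δ) * u := by
        field_simp
      rw [this]
    rw [hsplit]
    linarith
  · -- degenerate case : no positive direction, use nonnegativity margin
    have hPe : Pset h = ∅ := Finset.not_nonempty_iff_eq_empty.1 hP
    have hz0 : ∀ i, zAll D x U i = 0 := fun i => realized_alloc_zero hPe i
    have hneg : ∀ i, h i ≤ 0 := by
      intro i
      by_contra hcc
      push_neg at hcc
      have : i ∈ Pset h := Finset.mem_filter.2 ⟨Finset.mem_univ i, hcc⟩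
      rw [hPe] at this
      exact absurd this (Finset.notMem_empty i)
    have h3 : ∑ i, h i * (zAll D x U i - x i) = ∑ i, (-(h i)) * x i := by
      apply Finset.sum_congr rfl
      intro i _
      rw [hz0 i]; ring
    have h4 : ∑ i, (-(h i)) * x i ≥ ∑ i, (-(h i)) * (r + δ) := by
      apply Finset.sum_le_sum
      intro i _
      exact mul_le_mul_of_nonneg_left (hxl i) (by linarith [hneg i])
    have h5 : ∑ i, (-(h i)) * (r + δ) = (r + δ) * ∑ i, |h i| := by
      rw [Finset.mul_sum]
      apply Finset.sum_congr rfl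
      intro i _
      rw [abs_of_nonpos (hneg i)]
      ring
    have husqrt : u = Real.sqrt (∑ i, (h i)^2) := by
      rw [← hu2, Real.sqrt_sq hu0]
    have h6 : u ≤ ∑ i, |h i| := by
      rw [husqrt]
      exact l2_le_l1 h
    have h7 : (r + δ) * u ≤ (r + δ) * ∑ i, |h i| :=
      mul_le_mul_of_nonneg_left h6 hrδ.le
    rw [h3]
    calc (r + δ) * u ≤ (r + δ) * ∑ i, |h i| := h7
      _ = ∑ i, (-(h i)) * (r + δ) := h5.symm
      _ ≤ ∑ i, (-(h i)) * x i := h4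
      
end Validity

section Validity2

variable {n : ℕ} {D : Fin n → Measure ℝ} {vbar : ℝ} [∀ i, IsProbabilityMeasure (D i)]

lemma validity (hn : 2 ≤ n) [NeZero n]
    (hsupp : ∀ i, D i (Set.Icc (0 : ℝ) vbar)ᶜ = 0) (hv0 : 0 ≤ vbar)
    {γ r δ : ℝ} {x : Fin n → ℝ}
    (hγ0 : 0 < γ) (hγ1 : γ < 1) (hr : 0 < r) (hδ : 0 < δ)
    (hx : x ∈ Ustar D vbar)
    (hball : euclBall x (r + δ) ⊆ Ustar D vbar)
    (hxl : ∀ i, r + δ ≤ x i)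
    (hF1 : (1 - γ) * (9*(n:ℝ)^2*vbar^2) ≤ 2*r*δ)
    (hF2 : (1 - γ)^2 * (9*(n:ℝ)^2*vbar^2) ≤ γ^2*r^2)
    {U : Fin n → ℝ} (hU : U ∈ euclBall x r)
    {v : Fin n → ℝ} (hvc : v ∈ cube n vbar) :
    Wmech D γ x U v ∈ euclBall x r := by
  set s := 1 - γ with hs_def
  have hs0 : 0 < s := by rw [hs_def]; linarith
  set h := hdir x U with hhd
  set z := zAll D x U with hzd
  set T : Fin n → ℝ := fun i => Tfun D h v i with hTd
  set ET : Fin n → ℝ := ETv D x U with hETd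
  set ζ : Fin n → ℝ := fun i => (z i - x i) - (T i - ET i) with hζd
  set u := euclDist x U with hud
  have hu0 : 0 ≤ u := euclDist_nonneg x U
  have hur : u ≤ r := hU
  have hu2 : u^2 = ∑ i, (h i)^2 := by
    rw [hud, euclDist_sq]
    apply Finset.sum_congr rfl
    intro i _
    have : h i = U i - x i := rfl
    rw [this]; ring
  have hγne : γ ≠ 0 := ne_of_gt hγ0
  -- coordinate identity
  have hcoord : ∀ i, x i - Wmech D γ x U v i = -((h i - s * ζ i)/γ) := by
    intro i
    have hζi : ζ i = (z i - x i) - (T i - ET i) := rfl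
    have hzi : z i = zAll D x U i := rfl
    have hTi : T i = Tfun D (hdir x U) v i := rfl
    have hETi : ET i = ETv D x U i := rfl
    have hhi : h i = U i - x i := rfl
    have hW : Wmech D γ x U v i
        = (U i - (1 - γ) * zAll D x U i)/γ
          + ((1-γ)/γ) * (Tfun D (hdir x U) v i - ETv D x U i) := rfl
    rw [hW, hζi, hTi, hETi, hzi, hhi, hs_def]
    field_simp
    ring
  -- hedge facts
  have hedge1 : ∑ i, h i * T i = 0 := hedge_zero hsupp hv0 hvc
  have hTint : ∀ i, Integrable (fun w => Tfun D h w i) (Measure.pi D) :=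
    fun i => Tfun_integrable hn hsupp hv0 h i
  have hedge2 : ∑ i, h i * ET i = 0 := by
    have hswap : ∑ i, h i * ET i = ∫ w, ∑ i, h i * Tfun D h w i ∂(Measure.pi D) := by
      rw [integral_finset_sum _ (fun i _ => (hTint i).const_mul (h i))]
      apply Finset.sum_congr rfl
      intro i _
      rw [hETd]
      exact (integral_const_mul _ _).symm
    rw [hswap]
    have : ∀ᵐ w ∂(Measure.pi D), (∑ i, h i * Tfun D h w i) = (0:ℝ) := by
      filter_upwards [pi_cube_ae hsupp] with w hw
      exact hedge_zero hsupp hv0 hw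
    rw [integral_congr_ae this]
    exact integral_zero _ _
  -- drift
  have hdrift : (r + δ) * u ≤ ∑ i, h i * (z i - x i) :=
    drift_bound hn hsupp hv0 hr hδ hball hxl U
  have hζdot : ∑ i, h i * ζ i = ∑ i, h i * (z i - x i) := by
    have hexp : ∀ i : Fin n, h i * ζ i = h i * (z i - x i) - h i * T i + h i * ET i := by
      intro i; rw [hζd]; ring
    rw [Finset.sum_congr rfl (fun i _ => hexp i), Finset.sum_add_distrib,
      Finset.sum_sub_distrib, hedge1, hedge2]
    ring
  -- bounds on ζ
  have hzmem : z ∈ Ustar D vbar := ⟨alloc (hdir x U), alloc_isAllocation _ _, rfl⟩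
  have hζsq : ∑ i, (ζ i)^2 ≤ 9*(n:ℝ)^2*vbar^2 := by
    have hn2 : (2:ℝ) ≤ (n:ℝ) := by exact_mod_cast hn
    have hbd : ∀ i, (ζ i)^2 ≤ (if i = istar h then ((2*(n:ℝ)-1)*vbar)^2 else (3*vbar)^2) := by
      intro i
      have h1 : |z i - x i| ≤ vbar := by
        rw [abs_le]
        constructor
        · have := Ustar_le_vbar hsupp hv0 hx i
          have := Ustar_nonneg hsupp hzmem i
          linarith
        · have := Ustar_le_vbar hsupp hv0 hzmem i
          have := Ustar_nonneg hsupp hx i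
          linarith
      have h2 : |T i| ≤ (if i = istar h then ((n:ℝ) - 1) * vbar else vbar) :=
        Tfun_bound hn hsupp hv0 hvc i
      have h3 : |ET i| ≤ (if i = istar h then ((n:ℝ) - 1) * vbar else vbar) := by
        rw [hETd]
        exact ETv_bound hn hsupp hv0 x U i
      have h4 : |ζ i| ≤ |z i - x i| + (|T i| + |ET i|) := by
        rw [hζd]
        calc |z i - x i - (T i - ET i)| ≤ |z i - x i| + |T i - ET i| := abs_sub _ _
          _ ≤ |z i - x i| + (|T i| + |ET i|) := by
              have := abs_sub (T i) (ET i)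
              linarith
      by_cases hi : i = istar h
      · rw [if_pos hi]
        rw [if_pos hi] at h2 h3
        have h5 : |ζ i| ≤ (2*(n:ℝ)-1)*vbar := by
          calc |ζ i| ≤ |z i - x i| + (|T i| + |ET i|) := h4
            _ ≤ vbar + (((n:ℝ)-1)*vbar + ((n:ℝ)-1)*vbar) := by linarith
            _ = (2*(n:ℝ)-1)*vbar := by ring
        calc (ζ i)^2 = |ζ i|^2 := (sq_abs _).symm
          _ ≤ ((2*(n:ℝ)-1)*vbar)^2 := by
              apply pow_le_pow_left₀ (abs_nonneg _) h5
      · rw [if_neg hi]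
        rw [if_neg hi] at h2 h3
        have h5 : |ζ i| ≤ 3*vbar := by
          calc |ζ i| ≤ |z i - x i| + (|T i| + |ET i|) := h4
            _ ≤ vbar + (vbar + vbar) := by linarith
            _ = 3*vbar := by ring
        calc (ζ i)^2 = |ζ i|^2 := (sq_abs _).symm
          _ ≤ (3*vbar)^2 := by
              apply pow_le_pow_left₀ (abs_nonneg _) h5
    have hsum : ∑ i, (ζ i)^2
        ≤ ∑ i, (if i = istar h then ((2*(n:ℝ)-1)*vbar)^2 else (3*vbar)^2) :=
      Finset.sum_le_sum (fun i _ => hbd i)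
    have hsum2 : ∑ i : Fin n, (if i = istar h then ((2*(n:ℝ)-1)*vbar)^2 else (3*vbar)^2)
        = ((2*(n:ℝ)-1)*vbar)^2 + ((n:ℝ) - 1) * (3*vbar)^2 := by
      have hrw : ∀ i : Fin n, (if i = istar h then ((2*(n:ℝ)-1)*vbar)^2 else (3*vbar)^2)
          = (3*vbar)^2 + (if i = istar h then ((2*(n:ℝ)-1)*vbar)^2 - (3*vbar)^2 else 0) := by
        intro i
        by_cases hi : i = istar h <;> simp [hi]
      rw [Finset.sum_congr rfl (fun i _ => hrw i), Finset.sum_add_distrib,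
        Finset.sum_const, Finset.sum_ite_eq' Finset.univ (istar h)]
      simp only [Finset.mem_univ, if_true, Finset.card_univ, Fintype.card_fin,
        nsmul_eq_mul]
      ring
    have hfin : ((2*(n:ℝ)-1)*vbar)^2 + ((n:ℝ) - 1) * (3*vbar)^2 ≤ 9*(n:ℝ)^2*vbar^2 := by
      nlinarith [sq_nonneg vbar, hn2]
    linarith
  -- expansion and quadratic bound
  have hexp : ∑ i, (h i - s * ζ i)^2
      = ∑ i, (h i)^2 - 2*s*(∑ i, h i * ζ i) + s^2 * ∑ i, (ζ i)^2 := by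
    rw [Finset.mul_sum, Finset.mul_sum, ← Finset.sum_sub_distrib, ← Finset.sum_add_distrib]
    apply Finset.sum_congr rfl
    intro i _
    ring
  have hmain : ∑ i, (h i - s * ζ i)^2 ≤ γ^2 * r^2 := by
    have h1 : ∑ i, (h i - s * ζ i)^2 ≤ u^2 - 2*s*((r + δ)*u) + s^2 * (9*(n:ℝ)^2*vbar^2) := by
      rw [hexp, ← hu2]
      have hb1 : 2*s*((r+δ)*u) ≤ 2*s*(∑ i, h i * ζ i) := by
        apply mul_le_mul_of_nonneg_left _ (by linarith)
        rw [hζdot]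
        exact hdrift
      have hb2 : s^2 * ∑ i, (ζ i)^2 ≤ s^2 * (9*(n:ℝ)^2*vbar^2) :=
        mul_le_mul_of_nonneg_left hζsq (sq_nonneg s)
      linarith
    have h2 : u^2 - 2*s*u*(r+δ) + s^2 * (9*(n:ℝ)^2*vbar^2) ≤ (1-s)^2 * r^2 := by
      apply quad_bound hu0 hur hr _ _ hs0
      · rw [hs_def]; exact hF1
      · rw [hs_def]
        have : (1 - (1-γ))^2 * r^2 = γ^2 * r^2 := by ring
        rw [this]
        exact hF2
    have h3 : (1-s)^2 * r^2 = γ^2 * r^2 := by rw [hs_def]; ring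
    calc ∑ i, (h i - s * ζ i)^2 ≤ u^2 - 2*s*((r+δ)*u) + s^2 * (9*(n:ℝ)^2*vbar^2) := h1
      _ = u^2 - 2*s*u*(r+δ) + s^2 * (9*(n:ℝ)^2*vbar^2) := by ring
      _ ≤ (1-s)^2 * r^2 := h2
      _ = γ^2 * r^2 := h3
  -- conclude
  show euclDist x (Wmech D γ x U v) ≤ r
  unfold euclDist
  have hsq : ∑ i, (x i - Wmech D γ x U v i)^2 = (1/γ^2) * ∑ i, (h i - s * ζ i)^2 := by
    rw [Finset.mul_sum]
    apply Finset.sum_congr rfl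
    intro i _
    rw [hcoord i]
    field_simp
  have hle : ∑ i, (x i - Wmech D γ x U v i)^2 ≤ r^2 := by
    rw [hsq]
    have hγ2 : 0 < γ^2 := by positivity
    calc (1/γ^2) * ∑ i, (h i - s * ζ i)^2 ≤ (1/γ^2) * (γ^2 * r^2) :=
          mul_le_mul_of_nonneg_left hmain (by positivity)
      _ = r^2 := by field_simp
  calc Real.sqrt (∑ i, (x i - Wmech D γ x U v i)^2) ≤ Real.sqrt (r^2) :=
        Real.sqrt_le_sqrt hle
    _ = r := Real.sqrt_sq hr.le

end Validity2

end BallProof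

set_option maxHeartbeats 1000000

/-- if a ball has a sufficiently large margin inside `𝒰*`, it is achievable
in the `γ`-discounted setting. -/
theorem ball_in_region {n : ℕ} (hn : 2 ≤ n) (vbar : ℝ) (hv : 0 < vbar)
    (D : Fin n → Measure ℝ) [∀ i, IsProbabilityMeasure (D i)]
    (hsupp : ∀ i, D i (Set.Icc (0 : ℝ) vbar)ᶜ = 0)
    (γ : ℝ) (hγ : γ ∈ Set.Ioo (0 : ℝ) 1)
    (x : Fin n → ℝ) (hx : x ∈ Ustar D vbar)
    (r δ : ℝ) (hr : 0 < r) (hδ : 0 < δ)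
    (hball : euclBall x (r + δ) ⊆ Ustar D vbar)
    (hmargin : ∀ i, x i + r < ∫ t, t ∂(D i))
    (hupper : δ ≤ r * γ / (1 - γ))
    (hlower : 4 * (n : ℝ) ^ 2 * vbar ^ 2 *
        (1 + (⨆ i, ∫ t, t ∂(D i)) / (⨅ i, (∫ t, t ∂(D i)) - x i - r)) ^ 2
        * (1 - γ) / (γ * r) ≤ δ) :
    euclBall x r ⊆ Ugamma D vbar γ := by
  classical
  haveI : NeZero n := ⟨by omega⟩
  obtain ⟨hγ0, hγ1⟩ := hγ
  have hγne : γ ≠ 0 := ne_of_gt hγ0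
  have hs0 : 0 < 1 - γ := by linarith
  have hv0 : 0 ≤ vbar := hv.le
  -- coordinates of x are at least r + δ
  have hxl : ∀ i, r + δ ≤ x i := by
    intro i
    have hy : Function.update x i (x i - (r + δ)) ∈ euclBall x (r + δ) := by
      show euclDist x (Function.update x i (x i - (r + δ))) ≤ r + δ
      rw [BallProof.euclDist_update x i (by linarith : (0:ℝ) ≤ r + δ)]
    have hnn := BallProof.Ustar_nonneg hsupp (hball hy) i
    rw [Function.update_self] at hnn
    linarith
  -- scalar facts
  set S := ⨆ i, ∫ t, t ∂(D i) with hS_def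
  set I := ⨅ i, (∫ t, t ∂(D i)) - x i - r with hI_def
  have hne : Nonempty (Fin n) := ⟨BallProof.fin0 n⟩
  have hIpos : 0 < I := by
    obtain ⟨i₀, hi₀⟩ := Finite.exists_min (fun i : Fin n => (∫ t, t ∂(D i)) - x i - r)
    have h1 : (0:ℝ) < (∫ t, t ∂(D i₀)) - x i₀ - r := by
      have := hmargin i₀; linarith
    have h2 : (∫ t, t ∂(D i₀)) - x i₀ - r ≤ I := le_ciInf hi₀
    linarith
  have hIleS : I ≤ S := by
    set j := BallProof.fin0 n
    have h1 : I ≤ (∫ t, t ∂(D j)) - x j - r :=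
      ciInf_le (Finite.bddBelow_range _) j
    have h2 : (∫ t, t ∂(D j)) ≤ S := by
      rw [hS_def]
      exact le_ciSup (f := fun i : Fin n => ∫ t, t ∂(D i)) (Finite.bddAbove_range _) j
    have h3 : 0 ≤ x j := BallProof.Ustar_nonneg hsupp hx j
    linarith
  have hA2 : (2:ℝ) ≤ 1 + S / I := by
    have := (one_le_div hIpos).2 hIleS
    linarith
  set C := 4 * (n : ℝ) ^ 2 * vbar ^ 2 * (1 + S / I) ^ 2 with hC_def
  have hn2 : (2:ℝ) ≤ (n:ℝ) := by exact_mod_cast hn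
  have hC9 : 9 * (n:ℝ)^2 * vbar^2 ≤ C := by
    have h4 : (4:ℝ) ≤ (1 + S/I)^2 := by nlinarith
    have hnv : (0:ℝ) ≤ (n:ℝ)^2 * vbar^2 := by positivity
    nlinarith
  have hγr : (0:ℝ) < γ * r := by positivity
  have hCd : C * (1 - γ) ≤ δ * (γ * r) := by
    have := (div_le_iff₀ hγr).1 hlower
    linarith
  have hdu : δ * (1 - γ) ≤ r * γ := by
    have := (le_div_iff₀ hs0).1 hupper
    linarith
  have hF1 : (1 - γ) * (9*(n:ℝ)^2*vbar^2) ≤ 2*r*δ := by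
    have h1 : (1-γ) * (9*(n:ℝ)^2*vbar^2) ≤ (1-γ) * C :=
      mul_le_mul_of_nonneg_left hC9 hs0.le
    have h2 : δ * (γ * r) ≤ 2*r*δ := by nlinarith [mul_pos hδ hr, hγ1]
    linarith [hCd, h1, h2]
  have hF2 : (1 - γ)^2 * (9*(n:ℝ)^2*vbar^2) ≤ γ^2*r^2 := by
    have h1 : C * (1-γ)^2 ≤ γ^2 * r^2 := by
      have e1 : C * (1-γ)^2 = (C * (1-γ)) * (1-γ) := by ring
      have e2 : (C*(1-γ))*(1-γ) ≤ (δ*(γ*r))*(1-γ) :=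
        mul_le_mul_of_nonneg_right hCd hs0.le
      have e3 : (δ*(γ*r))*(1-γ) = (γ*r)*(δ*(1-γ)) := by ring
      have e4 : (γ*r)*(δ*(1-γ)) ≤ (γ*r)*(r*γ) :=
        mul_le_mul_of_nonneg_left hdu hγr.le
      nlinarith [e2, e4]
    have h2 : (1-γ)^2 * (9*(n:ℝ)^2*vbar^2) ≤ (1-γ)^2 * C :=
      mul_le_mul_of_nonneg_left hC9 (sq_nonneg _)
    nlinarith [h1, h2]
  -- now the main membership argument
  intro U₀ hU₀
  have hsub : euclBall x r ⊆ Ustar D vbar := by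
    intro y hy
    have hy' : euclDist x y ≤ r := hy
    exact hball (show euclDist x y ≤ r + δ by linarith)
  refine ⟨fun i => BallProof.Ustar_nonneg hsupp (hsub hU₀) i,
    euclBall x r, hsub, hU₀,
    (fun U => BallProof.alloc (BallProof.hdir x U)),
    (fun U => BallProof.Wmech D γ x U),
    ?_, ?_, ?_, ?_, ?_⟩
  · -- allocations
    intro U _
    exact BallProof.alloc_isAllocation _ _
  · -- measurability
    intro U _
    exact BallProof.Wmech_measurable γ x U
  · -- promise keeping
    intro U _ i
    exact BallProof.promise_keeping hn hsupp hv0 hγne x U i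
  · -- validity
    intro U hU v hvc
    exact BallProof.validity hn hsupp hv0 hγ0 hγ1 hr hδ hx hball hxl hF1 hF2 hU hvc
  · -- incentive compatibility
    intro U _ i a ha b hb
    obtain ⟨c0, hc0⟩ := BallProof.interim_W_form hn hsupp hv0 γ x U i
    have hQb : interimFn D (BallProof.alloc (BallProof.hdir x U)) i b
        = BallProof.Qf D (BallProof.hdir x U) i b := rfl
    have hQa : interimFn D (BallProof.alloc (BallProof.hdir x U)) i a
        = BallProof.Qf D (BallProof.hdir x U) i a := rfl
    rw [hQb, hQa, hc0 a, hc0 b]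
    have key := BallProof.mh_ic (D := D) (BallProof.hdir x U) i a b
    have hkey2 : (1-γ)*(a * BallProof.Qf D (BallProof.hdir x U) i b
          - BallProof.mh D (BallProof.hdir x U) i b)
        ≤ (1-γ)*(a * BallProof.Qf D (BallProof.hdir x U) i a
          - BallProof.mh D (BallProof.hdir x U) i a) :=
      mul_le_mul_of_nonneg_left key hs0.le
    have hexp : ∀ m : ℝ, γ*(c0 - (1-γ)/γ*m) = γ*c0 - (1-γ)*m := by
      intro m; field_simp
    rw [hexp, hexp]
    have hgoal : (1-γ)*a*BallProof.Qf D (BallProof.hdir x U) i b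
          + (γ*c0 - (1-γ)*BallProof.mh D (BallProof.hdir x U) i b)
        - ((1-γ)*a*BallProof.Qf D (BallProof.hdir x U) i a
          + (γ*c0 - (1-γ)*BallProof.mh D (BallProof.hdir x U) i a))
        = (1-γ)*(a * BallProof.Qf D (BallProof.hdir x U) i b
            - BallProof.mh D (BallProof.hdir x U) i b)
          - (1-γ)*(a * BallProof.Qf D (BallProof.hdir x U) i a
            - BallProof.mh D (BallProof.hdir x U) i a) := by ring
    linarith [hkey2, hgoal]
end

section
/- For every integer T ≥ 2 one has 𝒱_{T−1} ⊆ 𝒱_T, and 𝒱_T ⊆ 𝒰_{1−1/T}. -/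
open MeasureTheory

section AuxLemmas

open MeasureTheory Set

variable {n : ℕ} {vbar : ℝ} {D : Fin n → Measure ℝ} [∀ i, IsProbabilityMeasure (D i)]

lemma cube_eq (n : ℕ) (vbar : ℝ) :
    cube n vbar = Set.pi Set.univ (fun _ : Fin n => Set.Icc (0:ℝ) vbar) := by
  ext v; simp only [cube, Set.mem_setOf_eq, Set.mem_pi, Set.mem_univ, forall_true_left]

lemma measurableSet_cube : MeasurableSet (cube n vbar) := by
  rw [cube_eq]; exact MeasurableSet.univ_pi (fun _ => measurableSet_Icc)

lemma ae_cube (hsupp : ∀ i, D i (Set.Icc (0 : ℝ) vbar)ᶜ = 0) :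
    ∀ᵐ v ∂(Measure.pi D), v ∈ cube n vbar := by
  have h1 : ∀ i, D i (Set.Icc (0:ℝ) vbar) = 1 := by
    intro i
    have h := measure_add_measure_compl (μ := D i) (measurableSet_Icc (a := (0:ℝ)) (b := vbar))
    rw [hsupp i, add_zero, measure_univ] at h
    exact h
  have hone : Measure.pi D (cube n vbar) = 1 := by
    rw [cube_eq, Measure.pi_pi]; simp [h1]
  have hc : Measure.pi D (cube n vbar)ᶜ = 0 :=
    (prob_compl_eq_zero_iff measurableSet_cube).mpr hone
  exact mem_ae_iff.mpr hc

lemma simplex_le_one {y : Fin n → ℝ} (h : y ∈ simplexSet n) (i : Fin n) : y i ≤ 1 :=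
  le_trans (Finset.single_le_sum (fun j _ => h.1 j) (Finset.mem_univ i)) h.2

lemma integrable_of_cube_bound {f : (Fin n → ℝ) → ℝ} (hm : Measurable f)
    (hsupp : ∀ i, D i (Set.Icc (0 : ℝ) vbar)ᶜ = 0) {C : ℝ}
    (hb : ∀ v ∈ cube n vbar, |f v| ≤ C) : Integrable f (Measure.pi D) := by
  refine (integrable_const C).mono' hm.aestronglyMeasurable ?_
  filter_upwards [ae_cube hsupp] with v hvc
  simpa [Real.norm_eq_abs] using hb v hvc

lemma measurable_comp_apply {g : (Fin n → ℝ) → (Fin n → ℝ)} (hg : Measurable g) (i : Fin n) :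
    Measurable fun v => g v i := (measurable_pi_apply i).comp hg

lemma measurable_updateFn (i : Fin n) (b : ℝ) :
    Measurable fun v : Fin n → ℝ => Function.update v i b := by
  apply measurable_pi_lambda
  intro j
  simp only [Function.update_apply]
  by_cases h : j = i <;> simp [h, measurable_pi_apply]

lemma update_mem_cube {v : Fin n → ℝ} (hvc : v ∈ cube n vbar) {i : Fin n} {b : ℝ}
    (hb : b ∈ Set.Icc (0:ℝ) vbar) : Function.update v i b ∈ cube n vbar := by
  intro j
  rcases eq_or_ne j i with h | h
  · subst h; simpa using hb
  · simpa [Function.update_apply, h] using hvc j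

lemma interim_integrable {g : (Fin n → ℝ) → (Fin n → ℝ)} (hg : Measurable g)
    (hsupp : ∀ i, D i (Set.Icc (0 : ℝ) vbar)ᶜ = 0) {C : ℝ} {i : Fin n} {b : ℝ}
    (hb : ∀ v ∈ cube n vbar, |g v i| ≤ C) (hbm : b ∈ Set.Icc (0:ℝ) vbar) :
    Integrable (fun v => g (Function.update v i b) i) (Measure.pi D) :=
  integrable_of_cube_bound ((measurable_comp_apply hg i).comp (measurable_updateFn i b)) hsupp
    (fun v hv => hb _ (update_mem_cube hv hbm))

lemma interimFn_const (c : Fin n → ℝ) (i : Fin n) (b : ℝ) :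
    interimFn D (fun _ => c) i b = c i := by
  simp [interimFn]

lemma interimFn_combo {g h : (Fin n → ℝ) → (Fin n → ℝ)} {a c : ℝ} {i : Fin n} {b : ℝ}
    (hgi : Integrable (fun v => g (Function.update v i b) i) (Measure.pi D))
    (hhi : Integrable (fun v => h (Function.update v i b) i) (Measure.pi D)) :
    interimFn D (fun v => a • g v + c • h v) i b
      = a * interimFn D g i b + c * interimFn D h i b := by
  unfold interimFn
  simp only [Pi.add_apply, Pi.smul_apply, smul_eq_mul]
  rw [integral_add (hgi.const_mul a) (hhi.const_mul c), integral_const_mul, integral_const_mul]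

lemma realized_mem_box (hsupp : ∀ i, D i (Set.Icc (0 : ℝ) vbar)ᶜ = 0) (hv : 0 ≤ vbar)
    {p : (Fin n → ℝ) → (Fin n → ℝ)} (hp : IsAllocation vbar p) (i : Fin n) :
    0 ≤ realized D p i ∧ realized D p i ≤ vbar := by
  have hbd : ∀ v ∈ cube n vbar, |v i * p v i| ≤ vbar := by
    intro v hvc
    have h1 := (hvc i : v i ∈ Set.Icc (0:ℝ) vbar)
    have h2 := hp.2 v hvc
    rw [abs_of_nonneg (mul_nonneg h1.1 (h2.1 i))]
    calc v i * p v i ≤ vbar * 1 :=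
          mul_le_mul h1.2 (simplex_le_one h2 i) (h2.1 i) hv
      _ = vbar := mul_one vbar
  have hint : Integrable (fun v => v i * p v i) (Measure.pi D) :=
    integrable_of_cube_bound ((measurable_pi_apply i).mul (measurable_comp_apply hp.1 i))
      hsupp hbd
  constructor
  · apply integral_nonneg_of_ae
    filter_upwards [ae_cube hsupp] with v hvc
    exact mul_nonneg ((hvc i).1) ((hp.2 v hvc).1 i)
  · calc (∫ v, v i * p v i ∂(Measure.pi D)) ≤ ∫ _, vbar ∂(Measure.pi D) := by
          apply integral_mono_ae hint (integrable_const _)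
          filter_upwards [ae_cube hsupp] with v hvc
          exact le_trans (le_abs_self _) (hbd v hvc)
      _ = vbar := by simp

end AuxLemmas
section Aux2

open MeasureTheory Set

variable {n : ℕ} {vbar : ℝ} {D : Fin n → Measure ℝ} [∀ i, IsProbabilityMeasure (D i)]

lemma alloc_abs_le_one {p : (Fin n → ℝ) → (Fin n → ℝ)} (hp : IsAllocation vbar p) (i : Fin n) :
    ∀ v ∈ cube n vbar, |p v i| ≤ 1 := fun v hv => by
  rw [abs_of_nonneg ((hp.2 v hv).1 i)]; exact simplex_le_one (hp.2 v hv) i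

lemma integrable_vp (hsupp : ∀ i, D i (Set.Icc (0 : ℝ) vbar)ᶜ = 0) (hv : 0 ≤ vbar)
    {p : (Fin n → ℝ) → (Fin n → ℝ)} (hp : IsAllocation vbar p) (i : Fin n) :
    Integrable (fun v => v i * p v i) (Measure.pi D) := by
  refine integrable_of_cube_bound ((measurable_pi_apply i).mul (measurable_comp_apply hp.1 i))
    hsupp (C := vbar) ?_
  intro v hvc
  have h1 := (hvc i : v i ∈ Set.Icc (0:ℝ) vbar)
  have h2 := hp.2 v hvc
  rw [abs_of_nonneg (mul_nonneg h1.1 (h2.1 i))]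
  calc v i * p v i ≤ vbar * 1 := mul_le_mul h1.2 (simplex_le_one h2 i) (h2.1 i) hv
    _ = vbar := mul_one vbar

lemma integrable_Wi (hsupp : ∀ i, D i (Set.Icc (0 : ℝ) vbar)ᶜ = 0)
    {W : (Fin n → ℝ) → (Fin n → ℝ)} (hW : Measurable W) {C : ℝ} {i : Fin n}
    (hWb : ∀ v ∈ cube n vbar, |W v i| ≤ C) :
    Integrable (fun v => W v i) (Measure.pi D) :=
  integrable_of_cube_bound (measurable_comp_apply hW i) hsupp hWb

lemma stage_split (hsupp : ∀ i, D i (Set.Icc (0 : ℝ) vbar)ᶜ = 0) (hv : 0 ≤ vbar)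
    {p W : (Fin n → ℝ) → (Fin n → ℝ)} (hp : IsAllocation vbar p) (hW : Measurable W)
    {C : ℝ} (i : Fin n) (hWb : ∀ v ∈ cube n vbar, |W v i| ≤ C) (r s : ℝ) :
    ∫ v, (r * (v i * p v i) + s * W v i) ∂(Measure.pi D)
      = r * (∫ v, v i * p v i ∂(Measure.pi D)) + s * (∫ v, W v i ∂(Measure.pi D)) := by
  rw [integral_add ((integrable_vp hsupp hv hp i).const_mul r)
    ((integrable_Wi hsupp hW hWb).const_mul s), integral_const_mul, integral_const_mul]

lemma interimFn_const_add_smul {g : (Fin n → ℝ) → (Fin n → ℝ)} {x : Fin n → ℝ} {s : ℝ}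
    {i : Fin n} {b : ℝ}
    (hint : Integrable (fun v => g (Function.update v i b) i) (Measure.pi D)) :
    interimFn D (fun v => x + s • g v) i b = x i + s * interimFn D g i b := by
  unfold interimFn
  simp only [Pi.add_apply, Pi.smul_apply, smul_eq_mul]
  rw [integral_add (integrable_const _) (hint.const_mul s), integral_const, integral_const_mul]
  simp

/-- Values of `Vset` lie in the box `[0, vbar]ⁿ`. -/
lemma Vset_box (hsupp : ∀ i, D i (Set.Icc (0 : ℝ) vbar)ᶜ = 0) (hv : 0 < vbar) :
    ∀ t : ℕ, ∀ U ∈ Vset D vbar t, ∀ i, 0 ≤ U i ∧ U i ≤ vbar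
  | 0, U, hU => by simp [Vset] at hU
  | 1, U, hU => by
      obtain ⟨p, hp, hic, rfl⟩ := hU
      exact realized_mem_box hsupp hv.le hp
  | (S+2), U, hU => by
      obtain ⟨hpos, p, W, hp, hW, hpk, hval, hic⟩ := hU
      intro i
      set x : ℝ := (S : ℝ) with hx
      have hx0 : (0:ℝ) ≤ x := by positivity
      have h2 : (0:ℝ) < x + 2 := by linarith
      have hWbox : ∀ v ∈ cube n vbar, 0 ≤ W v i ∧ W v i ≤ vbar := fun v hvc =>
        Vset_box hsupp hv (S+1) (W v) (hval v hvc) i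
      have hmeas : Measurable fun v : Fin n → ℝ =>
          (1 - (1 - 1 / (x + 2))) * (v i * p v i) + (1 - 1 / (x + 2)) * W v i :=
        (((measurable_pi_apply i).mul (measurable_comp_apply hp.1 i)).const_mul _).add
          ((measurable_comp_apply hW i).const_mul _)
      have hc0 : 0 ≤ 1 - 1/(x+2) := by
        rw [sub_nonneg, div_le_one h2]; linarith
      have hc1 : 1/(x+2) ≤ 1 := by
        rw [div_le_one h2]; linarith
      have hbound : ∀ v ∈ cube n vbar,
          ((1 - (1 - 1 / (x + 2))) * (v i * p v i) + (1 - 1 / (x + 2)) * W v i) ∈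
            Set.Icc (0:ℝ) vbar := by
        intro v hvc
        have h1 := (hvc i : v i ∈ Set.Icc (0:ℝ) vbar)
        have hpv := hp.2 v hvc
        have hvp0 : 0 ≤ v i * p v i := mul_nonneg h1.1 (hpv.1 i)
        have hvp1 : v i * p v i ≤ vbar := by
          calc v i * p v i ≤ vbar * 1 :=
              mul_le_mul h1.2 (simplex_le_one hpv i) (hpv.1 i) hv.le
            _ = vbar := mul_one vbar
        have hW0 := (hWbox v hvc).1
        have hW1 := (hWbox v hvc).2
        have hcc : 0 ≤ 1/(x+2) := by positivity
        constructor
        · have : (0:ℝ) ≤ (1 - (1 - 1 / (x + 2))) * (v i * p v i) := by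
            have : (1 - (1 - 1 / (x + 2))) = 1/(x+2) := by ring
            rw [this]; exact mul_nonneg hcc hvp0
          nlinarith [mul_nonneg hc0 hW0]
        · nlinarith [mul_le_mul_of_nonneg_left hvp1 hcc, mul_le_mul_of_nonneg_left hW1 hc0]
      rw [hpk i]
      have hint : Integrable (fun v =>
          (1 - (1 - 1 / (x + 2))) * (v i * p v i) + (1 - 1 / (x + 2)) * W v i) (Measure.pi D) :=
        integrable_of_cube_bound hmeas hsupp (C := vbar)
          (fun v hvc => by rw [abs_of_nonneg (hbound v hvc).1]; exact (hbound v hvc).2)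
      constructor
      · apply integral_nonneg_of_ae
        filter_upwards [ae_cube hsupp] with v hvc
        exact (hbound v hvc).1
      · refine le_trans (integral_mono_ae hint (integrable_const vbar) ?_) (le_of_eq (by simp))
        filter_upwards [ae_cube hsupp] with v hvc
        exact (hbound v hvc).2

end Aux2
section Aux3

open MeasureTheory Set

variable {n : ℕ} {vbar : ℝ} {D : Fin n → Measure ℝ} [∀ i, IsProbabilityMeasure (D i)]

lemma pk_step {x R E Ui : ℝ} (hx : 0 ≤ x)
    (h : Ui = (1-(1-1/(x+2)))*R + (1-1/(x+2))*E) :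
    Ui = (1-(1-1/(x+3)))*R + (1-1/(x+3))*((1/(x+2))*Ui + (1-1/(x+2))*E) := by
  have h2 : (0:ℝ) < x+2 := by linarith
  have h3 : (0:ℝ) < x+3 := by linarith
  field_simp at h ⊢
  linear_combination (x+2)*h

lemma ic_step {x aa Pb Pa Wb Wa Ui : ℝ} (hx : 0 ≤ x)
    (old : (1-(1-1/(x+2)))*aa*Pb + (1-1/(x+2))*Wb ≤ (1-(1-1/(x+2)))*aa*Pa + (1-1/(x+2))*Wa) :
    (1-(1-1/(x+3)))*aa*Pb + (1-1/(x+3))*((1/(x+2))*Ui + (1-1/(x+2))*Wb) ≤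
    (1-(1-1/(x+3)))*aa*Pa + (1-1/(x+3))*((1/(x+2))*Ui + (1-1/(x+2))*Wa) := by
  have h2 : (0:ℝ) < x+2 := by linarith
  have h3 : (0:ℝ) < x+3 := by linarith
  rw [← sub_nonneg] at old ⊢
  have key : ((1-(1-1/(x+3)))*aa*Pa + (1-1/(x+3))*((1/(x+2))*Ui + (1-1/(x+2))*Wa)) -
      ((1-(1-1/(x+3)))*aa*Pb + (1-1/(x+3))*((1/(x+2))*Ui + (1-1/(x+2))*Wb))
      = ((x+2)/(x+3)) * ((((1-(1-1/(x+2)))*aa*Pa + (1-1/(x+2))*Wa) -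
          ((1-(1-1/(x+2)))*aa*Pb + (1-1/(x+2))*Wb))) := by
    field_simp
    ring
  rw [key]
  exact mul_nonneg (by positivity) old

lemma Wbox_abs (hsupp : ∀ i, D i (Set.Icc (0 : ℝ) vbar)ᶜ = 0) (hv : 0 < vbar) {t : ℕ}
    {W : (Fin n → ℝ) → (Fin n → ℝ)} (hval : ∀ v ∈ cube n vbar, W v ∈ Vset D vbar t) :
    ∀ v ∈ cube n vbar, ∀ j, |W v j| ≤ vbar := fun v hvc j => by
  have h := Vset_box hsupp hv t (W v) (hval v hvc) j
  rw [abs_of_nonneg h.1]; exact h.2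

lemma U0set_convex (hsupp : ∀ i, D i (Set.Icc (0 : ℝ) vbar)ᶜ = 0) (hv : 0 < vbar) :
    Convex ℝ (U0set D vbar) := by
  intro X hX Y hY a b ha hb hab
  obtain ⟨p, hp, hicp, rfl⟩ := hX
  obtain ⟨q, hq, hicq, rfl⟩ := hY
  refine ⟨fun v => a • p v + b • q v, ⟨?_, ?_⟩, ?_, ?_⟩
  · exact (hp.1.const_smul a).add (hq.1.const_smul b)
  · intro v hvc
    have h1 := hp.2 v hvc; have h2 := hq.2 v hvc
    constructor
    · intro i
      simp only [Pi.add_apply, Pi.smul_apply, smul_eq_mul]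
      exact add_nonneg (mul_nonneg ha (h1.1 i)) (mul_nonneg hb (h2.1 i))
    · simp only [Pi.add_apply, Pi.smul_apply, smul_eq_mul]
      rw [Finset.sum_add_distrib, ← Finset.mul_sum, ← Finset.mul_sum]
      nlinarith [mul_le_mul_of_nonneg_left h1.2 ha, mul_le_mul_of_nonneg_left h2.2 hb]
  · intro i aa haa bb hbb
    have h1 := interim_integrable hp.1 hsupp (alloc_abs_le_one hp i) hbb
    have h2 := interim_integrable hq.1 hsupp (alloc_abs_le_one hq i) hbb
    have h3 := interim_integrable hp.1 hsupp (alloc_abs_le_one hp i) haa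
    have h4 := interim_integrable hq.1 hsupp (alloc_abs_le_one hq i) haa
    rw [interimFn_combo h1 h2, interimFn_combo h3 h4]
    nlinarith [mul_le_mul_of_nonneg_left (hicp i aa haa bb hbb) ha,
      mul_le_mul_of_nonneg_left (hicq i aa haa bb hbb) hb]
  · funext i
    simp only [Pi.add_apply, Pi.smul_apply, smul_eq_mul, realized]
    have he : (fun v => v i * (a * p v i + b * q v i))
        = fun v => a * (v i * p v i) + b * (v i * q v i) := by
      funext v; ring
    rw [show (∫ v, v i * (a * p v i + b * q v i) ∂(Measure.pi D))
        = ∫ v, (a * (v i * p v i) + b * (v i * q v i)) ∂(Measure.pi D) from by rw [he],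
      integral_add ((integrable_vp hsupp hv.le hp i).const_mul a)
      ((integrable_vp hsupp hv.le hq i).const_mul b), integral_const_mul, integral_const_mul]

lemma Vset_convex (hsupp : ∀ i, D i (Set.Icc (0 : ℝ) vbar)ᶜ = 0) (hv : 0 < vbar) :
    ∀ t : ℕ, Convex ℝ (Vset D vbar t)
  | 0 => by rw [show Vset D vbar 0 = ∅ from rfl]; exact convex_empty
  | 1 => U0set_convex hsupp hv
  | (S+2) => by
    intro X hX Y hY a b ha hb hab
    obtain ⟨hposX, p, W, hp, hW, hpkX, hvalX, hicX⟩ := hX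
    obtain ⟨hposY, q, V, hq, hV, hpkY, hvalY, hicY⟩ := hY
    have hWb := Wbox_abs hsupp hv hvalX
    have hVb := Wbox_abs hsupp hv hvalY
    refine ⟨?_, fun v => a • p v + b • q v, fun v => a • W v + b • V v,
      ⟨?_, ?_⟩, ?_, ?_, ?_, ?_⟩
    · intro i
      simp only [Pi.add_apply, Pi.smul_apply, smul_eq_mul]
      exact add_nonneg (mul_nonneg ha (hposX i)) (mul_nonneg hb (hposY i))
    · exact (hp.1.const_smul a).add (hq.1.const_smul b)
    · intro v hvc
      have h1 := hp.2 v hvc; have h2 := hq.2 v hvc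
      constructor
      · intro i
        simp only [Pi.add_apply, Pi.smul_apply, smul_eq_mul]
        exact add_nonneg (mul_nonneg ha (h1.1 i)) (mul_nonneg hb (h2.1 i))
      · simp only [Pi.add_apply, Pi.smul_apply, smul_eq_mul]
        rw [Finset.sum_add_distrib, ← Finset.mul_sum, ← Finset.mul_sum]
        nlinarith [mul_le_mul_of_nonneg_left h1.2 ha, mul_le_mul_of_nonneg_left h2.2 hb]
    · exact (hW.const_smul a).add (hV.const_smul b)
    · intro i
      simp only [Pi.add_apply, Pi.smul_apply, smul_eq_mul]
      have he : (fun v => (1 - (1 - 1 / ((S : ℝ) + 2))) * (v i * (a * p v i + b * q v i))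
            + (1 - 1 / ((S : ℝ) + 2)) * (a * W v i + b * V v i))
          = fun v => a * ((1 - (1 - 1 / ((S : ℝ) + 2))) * (v i * p v i)
              + (1 - 1 / ((S : ℝ) + 2)) * W v i)
            + b * ((1 - (1 - 1 / ((S : ℝ) + 2))) * (v i * q v i)
              + (1 - 1 / ((S : ℝ) + 2)) * V v i) := by
        funext v; ring
      have hintX : Integrable (fun v => (1 - (1 - 1 / ((S : ℝ) + 2))) * (v i * p v i)
          + (1 - 1 / ((S : ℝ) + 2)) * W v i) (Measure.pi D) :=
        ((integrable_vp hsupp hv.le hp i).const_mul _).add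
          ((integrable_Wi hsupp hW (fun v hvc => hWb v hvc i)).const_mul _)
      have hintY : Integrable (fun v => (1 - (1 - 1 / ((S : ℝ) + 2))) * (v i * q v i)
          + (1 - 1 / ((S : ℝ) + 2)) * V v i) (Measure.pi D) :=
        ((integrable_vp hsupp hv.le hq i).const_mul _).add
          ((integrable_Wi hsupp hV (fun v hvc => hVb v hvc i)).const_mul _)
      calc a * X i + b * Y i
          = a * (∫ v, ((1 - (1 - 1 / ((S : ℝ) + 2))) * (v i * p v i)
              + (1 - 1 / ((S : ℝ) + 2)) * W v i) ∂(Measure.pi D))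
            + b * (∫ v, ((1 - (1 - 1 / ((S : ℝ) + 2))) * (v i * q v i)
              + (1 - 1 / ((S : ℝ) + 2)) * V v i) ∂(Measure.pi D)) := by
            rw [← hpkX i, ← hpkY i]
        _ = ∫ v, ((1 - (1 - 1 / ((S : ℝ) + 2))) * (v i * (a * p v i + b * q v i))
              + (1 - 1 / ((S : ℝ) + 2)) * (a * W v i + b * V v i)) ∂(Measure.pi D) := by
            rw [he, integral_add (hintX.const_mul a) (hintY.const_mul b),
              integral_const_mul, integral_const_mul]
    · intro v hvc
      exact Vset_convex hsupp hv (S+1) (hvalX v hvc) (hvalY v hvc) ha hb hab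
    · intro i aa haa bb hbb
      have h1 := interim_integrable hp.1 hsupp (alloc_abs_le_one hp i) hbb
      have h2 := interim_integrable hq.1 hsupp (alloc_abs_le_one hq i) hbb
      have h3 := interim_integrable hp.1 hsupp (alloc_abs_le_one hp i) haa
      have h4 := interim_integrable hq.1 hsupp (alloc_abs_le_one hq i) haa
      have h5 := interim_integrable hW hsupp (fun v hvc => hWb v hvc i) hbb
      have h6 := interim_integrable hV hsupp (fun v hvc => hVb v hvc i) hbb
      have h7 := interim_integrable hW hsupp (fun v hvc => hWb v hvc i) haa
      have h8 := interim_integrable hV hsupp (fun v hvc => hVb v hvc i) haa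
      rw [interimFn_combo h1 h2, interimFn_combo h3 h4,
        interimFn_combo h5 h6, interimFn_combo h7 h8]
      nlinarith [mul_le_mul_of_nonneg_left (hicX i aa haa bb hbb) ha,
        mul_le_mul_of_nonneg_left (hicY i aa haa bb hbb) hb]

end Aux3
section Aux4

open MeasureTheory Set

variable {n : ℕ} {vbar : ℝ} {D : Fin n → Measure ℝ} [∀ i, IsProbabilityMeasure (D i)]

lemma Vset_mono (hsupp : ∀ i, D i (Set.Icc (0 : ℝ) vbar)ᶜ = 0) (hv : 0 < vbar) :
    ∀ S : ℕ, Vset D vbar (S+1) ⊆ Vset D vbar (S+2)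
  | 0 => by
    rintro U ⟨p, hp, hic, rfl⟩
    refine ⟨fun i => (realized_mem_box hsupp hv.le hp i).1,
      p, fun _ => realized D p, hp, measurable_const, ?_, ?_, ?_⟩
    · intro i
      rw [stage_split hsupp hv.le hp measurable_const (C := vbar) i
        (fun v _ => by
          have h := realized_mem_box hsupp hv.le hp i
          rw [abs_of_nonneg h.1]; exact h.2), integral_const]
      simp only [measure_univ, ENNReal.toReal_one, probReal_univ, one_smul, realized]
      push_cast
      ring
    · intro v _
      exact ⟨p, hp, hic, rfl⟩
    · intro i aa haa bb hbb
      rw [interimFn_const, interimFn_const]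
      have h := hic i aa haa bb hbb
      have h2 := mul_le_mul_of_nonneg_left h
        (show (0:ℝ) ≤ 1-(1-1/(((0:ℕ):ℝ)+2)) by norm_num)
      linarith
  | (S+1) => by
    intro U hU
    have hUmem := hU
    obtain ⟨hpos, p, W, hp, hW, hpk, hval, hic⟩ := hU
    have hx0 : (0:ℝ) ≤ (S:ℝ) := by positivity
    have h2 : (0:ℝ) < (S:ℝ)+2 := by linarith
    have hθ0 : (0:ℝ) ≤ 1/((S:ℝ)+2) := by positivity
    have hθ1 : 1/((S:ℝ)+2) ≤ 1 := by rw [div_le_one h2]; linarith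
    have hUbox : ∀ j, 0 ≤ U j ∧ U j ≤ vbar := fun j => Vset_box hsupp hv (S+2) U hUmem j
    have hWb := Wbox_abs hsupp hv hval
    have hW'meas : Measurable fun v : Fin n → ℝ =>
        (1/((S:ℝ)+2)) • U + (1 - 1/((S:ℝ)+2)) • W v := by
      apply measurable_pi_lambda
      intro j
      simp only [Pi.add_apply, Pi.smul_apply, smul_eq_mul]
      exact ((measurable_comp_apply hW j).const_mul _).const_add _
    have hW'b : ∀ v ∈ cube n vbar, ∀ j,
        |((1/((S:ℝ)+2)) • U + (1 - 1/((S:ℝ)+2)) • W v) j| ≤ vbar := by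
      intro v hvc j
      simp only [Pi.add_apply, Pi.smul_apply, smul_eq_mul]
      have h1 := hUbox j
      have h3 := Vset_box hsupp hv (S+1) (W v) (hval v hvc) j
      rw [abs_of_nonneg (by nlinarith [h1.1, h3.1] :
        (0:ℝ) ≤ 1/((S:ℝ)+2) * U j + (1 - 1/((S:ℝ)+2)) * W v j)]
      nlinarith [h1.2, h3.2]
    refine ⟨hpos, p, fun v => (1/((S:ℝ)+2)) • U + (1 - 1/((S:ℝ)+2)) • W v,
      hp, hW'meas, ?_, ?_, ?_⟩
    · intro i
      rw [stage_split hsupp hv.le hp hW'meas (C := vbar) i (fun v hvc => hW'b v hvc i)]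
      simp only [Pi.add_apply, Pi.smul_apply, smul_eq_mul]
      rw [integral_add (integrable_const _)
        ((integrable_Wi hsupp hW (fun v hvc => hWb v hvc i)).const_mul _),
        integral_const, integral_const_mul]
      simp only [measure_univ, ENNReal.toReal_one, probReal_univ, one_smul]
      push_cast
      rw [show ((S:ℝ)+1)+2 = (S:ℝ)+3 from by ring]
      exact pk_step hx0 ((hpk i).trans
        (stage_split hsupp hv.le hp hW (C := vbar) i (fun v hvc => hWb v hvc i) _ _))
    · intro v hvc
      exact Vset_convex hsupp hv (S+2) hUmem (Vset_mono hsupp hv S (hval v hvc))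
        hθ0 (by linarith) (by ring)
    · intro i aa haa bb hbb
      have hb1 := interim_integrable hW hsupp (fun v hvc => hWb v hvc i) hbb
      have hb2 := interim_integrable hW hsupp (fun v hvc => hWb v hvc i) haa
      rw [interimFn_const_add_smul hb1, interimFn_const_add_smul hb2]
      simp only [Pi.smul_apply, smul_eq_mul]
      push_cast
      rw [show ((S:ℝ)+1)+2 = (S:ℝ)+3 from by ring]
      exact ic_step hx0 (hic i aa haa bb hbb)

end Aux4
section Aux5

open MeasureTheory Set
open scoped ENNReal

variable {n : ℕ} {vbar : ℝ} {D : Fin n → Measure ℝ} [∀ i, IsProbabilityMeasure (D i)]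

set_option maxHeartbeats 2000000 in
lemma Ustar_isClosed (hsupp : ∀ i, D i (Set.Icc (0 : ℝ) vbar)ᶜ = 0) (hv : 0 < vbar) :
    IsClosed (Ustar D vbar) := by
  classical
  set μ : Measure (Fin n → ℝ) := Measure.pi D with hμdef
  set gf : Fin n → (Fin n → ℝ) → ℝ := fun i => (cube n vbar).indicator (fun v => v i) with hgf
  have gf_meas : ∀ i, Measurable (gf i) := fun i =>
    (measurable_pi_apply i).indicator measurableSet_cube
  have gf_bound : ∀ i v, |gf i v| ≤ vbar := by
    intro i v
    by_cases h : v ∈ cube n vbar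
    · rw [hgf]; simp only [Set.indicator_of_mem h]
      rw [abs_of_nonneg (h i).1]; exact (h i).2
    · rw [hgf]; simp only [Set.indicator_of_notMem h]; simpa using hv.le
  have gf_mem : ∀ i, MemLp (gf i) 2 μ := fun i =>
    MemLp.of_bound (gf_meas i).aestronglyMeasurable vbar
      (Filter.Eventually.of_forall fun v => by simpa [Real.norm_eq_abs] using gf_bound i v)
  set g : Fin n → Lp ℝ 2 μ := fun i => MemLp.toLp (gf i) (gf_mem i) with hgdef
  set ind : ∀ A : Set (Fin n → ℝ), MeasurableSet A → Lp ℝ 2 μ :=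
    fun A hA => indicatorConstLp 2 hA (measure_ne_top μ A) (1:ℝ) with hinddef
  have eval_ind : ∀ (f : Lp ℝ 2 μ) (A : Set (Fin n → ℝ)) (hA : MeasurableSet A),
      (inner ℝ f (ind A hA) : ℝ) = ∫ v in A, f v ∂μ := by
    intro f A hA
    rw [real_inner_comm, hinddef]
    rw [L2.inner_indicatorConstLp_eq_setIntegral_inner]
    simp [RCLike.inner_apply]
  have eval_g : ∀ (i : Fin n) (f : Lp ℝ 2 μ),
      (inner ℝ f (g i) : ℝ) = ∫ v, f v * gf i v ∂μ := by
    intro i f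
    rw [L2.inner_def]
    apply integral_congr_ae
    filter_upwards [MemLp.coeFn_toLp (gf_mem i)] with v hveq
    rw [RCLike.inner_apply]
    simp only [hgdef, starRingEnd_apply, star_trivial]
    rw [hveq, mul_comm]
  set Ψ : (Fin n → WeakDual ℝ (Lp ℝ 2 μ)) → (Fin n → ℝ) := fun φ i => φ i (g i) with hΨdef
  set K : Set (Fin n → WeakDual ℝ (Lp ℝ 2 μ)) :=
    {φ | ∀ A, ∀ hA : MeasurableSet A,
        (∀ i, 0 ≤ φ i (ind A hA)) ∧ ∑ i, φ i (ind A hA) ≤ (μ A).toReal} ∩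
      Set.pi Set.univ (fun _ => WeakDual.toStrongDual ⁻¹' Metric.closedBall 0 1) with hKdef
  have hK1 : IsClosed {φ : Fin n → WeakDual ℝ (Lp ℝ 2 μ) | ∀ A, ∀ hA : MeasurableSet A,
      (∀ i, 0 ≤ φ i (ind A hA)) ∧ ∑ i, φ i (ind A hA) ≤ (μ A).toReal} := by
    have hrw : {φ : Fin n → WeakDual ℝ (Lp ℝ 2 μ) | ∀ A, ∀ hA : MeasurableSet A,
        (∀ i, 0 ≤ φ i (ind A hA)) ∧ ∑ i, φ i (ind A hA) ≤ (μ A).toReal}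
        = ⋂ (A : Set (Fin n → ℝ)), ⋂ (hA : MeasurableSet A),
          ((⋂ i, {φ : Fin n → WeakDual ℝ (Lp ℝ 2 μ) | 0 ≤ φ i (ind A hA)}) ∩
            {φ : Fin n → WeakDual ℝ (Lp ℝ 2 μ) | ∑ i, φ i (ind A hA) ≤ (μ A).toReal}) := by
      ext φ
      simp only [Set.mem_setOf_eq, Set.mem_iInter, Set.mem_inter_iff]
      try tauto
    rw [hrw]
    refine isClosed_iInter fun A => isClosed_iInter fun hA => IsClosed.inter ?_ ?_
    · exact isClosed_iInter fun i =>
        isClosed_le continuous_const ((WeakDual.eval_continuous _).comp (continuous_apply i))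
    · exact isClosed_le (continuous_finset_sum _ fun i _ =>
        (WeakDual.eval_continuous _).comp (continuous_apply i)) continuous_const
  have hKcomp : IsCompact K :=
    IsCompact.of_isClosed_subset
      (isCompact_univ_pi fun _ => WeakDual.isCompact_closedBall (𝕜 := ℝ) 0 1)
      (hK1.inter (isClosed_set_pi fun _ _ => WeakDual.isClosed_closedBall 0 1))
      Set.inter_subset_right
  have hΨcont : Continuous Ψ :=
    continuous_pi fun i => (WeakDual.eval_continuous (g i)).comp (continuous_apply i)
  have himg : Ustar D vbar = Ψ '' K := by
    ext U
    constructor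
    · rintro ⟨p, hp, rfl⟩
      set qf : Fin n → (Fin n → ℝ) → ℝ :=
        fun i => (cube n vbar).indicator (fun v => p v i) with hqf
      have qf_meas : ∀ i, Measurable (qf i) := fun i =>
        (measurable_comp_apply hp.1 i).indicator measurableSet_cube
      have qf_nonneg : ∀ i v, 0 ≤ qf i v := by
        intro i v; rw [hqf]
        by_cases h : v ∈ cube n vbar
        · simp only [Set.indicator_of_mem h]; exact (hp.2 v h).1 i
        · simp [Set.indicator_of_notMem h]
      have qf_le_one : ∀ i v, qf i v ≤ 1 := by
        intro i v; rw [hqf]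
        by_cases h : v ∈ cube n vbar
        · simp only [Set.indicator_of_mem h]; exact simplex_le_one (hp.2 v h) i
        · simp [Set.indicator_of_notMem h]
      have qf_sum : ∀ v, ∑ i, qf i v ≤ 1 := by
        intro v
        by_cases h : v ∈ cube n vbar
        · simp only [hqf, Set.indicator_of_mem h]; exact (hp.2 v h).2
        · simp [hqf, Set.indicator_of_notMem h]
      have qf_mem : ∀ i, MemLp (qf i) 2 μ := fun i =>
        MemLp.of_bound (qf_meas i).aestronglyMeasurable 1
          (Filter.Eventually.of_forall fun v => by
            rw [Real.norm_eq_abs, abs_of_nonneg (qf_nonneg i v)]; exact qf_le_one i v)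
      set f : Fin n → Lp ℝ 2 μ := fun i => MemLp.toLp (qf i) (qf_mem i) with hfdef
      set φ : Fin n → WeakDual ℝ (Lp ℝ 2 μ) := fun i =>
        StrongDual.toWeakDual (InnerProductSpace.toDual ℝ (Lp ℝ 2 μ) (f i)) with hφdef
      have hφ_apply : ∀ i x, φ i x = (inner ℝ (f i) x : ℝ) := fun i x => rfl
      have hsetint : ∀ i A (hA : MeasurableSet A), φ i (ind A hA) = ∫ v in A, qf i v ∂μ := by
        intro i A hA
        rw [hφ_apply, eval_ind]
        exact integral_congr_ae (ae_restrict_of_ae (MemLp.coeFn_toLp (qf_mem i)))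
      have hIntOn : ∀ i (A : Set (Fin n → ℝ)), IntegrableOn (qf i) A μ := fun i A =>
        ((qf_mem i).integrable one_le_two).integrableOn
      refine ⟨φ, ⟨?_, ?_⟩, ?_⟩
      · intro A hA
        constructor
        · intro i; rw [hsetint]; exact setIntegral_nonneg hA fun v _ => qf_nonneg i v
        · calc ∑ i, φ i (ind A hA) = ∑ i, ∫ v in A, qf i v ∂μ :=
                Finset.sum_congr rfl fun i _ => hsetint i A hA
            _ = ∫ v in A, ∑ i, qf i v ∂μ :=
                (integral_finset_sum _ fun i _ => hIntOn i A).symm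
            _ ≤ ∫ _ in A, (1:ℝ) ∂μ :=
                setIntegral_mono_on (integrable_finset_sum _ fun i _ => hIntOn i A)
                  (integrableOn_const (measure_ne_top μ A)) hA
                  (fun v _ => qf_sum v)
            _ = (μ A).toReal := by simp [Measure.real]
      · intro i _
        simp only [Set.mem_preimage, mem_closedBall_zero_iff]
        have hval : WeakDual.toStrongDual (φ i) = InnerProductSpace.toDual ℝ (Lp ℝ 2 μ) (f i) :=
          rfl
        rw [hval, LinearIsometryEquiv.norm_map]
        have hb := Lp.norm_le_of_ae_bound (f := f i) zero_le_one
          ((MemLp.coeFn_toLp (qf_mem i)).mono fun v hveq => by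
            rw [hveq, Real.norm_eq_abs, abs_of_nonneg (qf_nonneg i v)]; exact qf_le_one i v)
        calc ‖f i‖ ≤ (measureUnivNNReal μ : ℝ) ^ (2:ℝ≥0∞).toReal⁻¹ * 1 := hb
          _ = 1 := by
            rw [measureUnivNNReal, measure_univ]
            simp
      · funext i
        rw [hΨdef]
        simp only []
        rw [hφ_apply, eval_g]
        apply integral_congr_ae
        filter_upwards [ae_cube hsupp, MemLp.coeFn_toLp (qf_mem i)] with v hvc hvq
        rw [hvq, hqf, hgf]
        simp only [Set.indicator_of_mem hvc]
        ring
    · rintro ⟨φ, hφK, rfl⟩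
      obtain ⟨hφ1, hφ2⟩ := hφK
      set f : Fin n → Lp ℝ 2 μ := fun i =>
        (InnerProductSpace.toDual ℝ (Lp ℝ 2 μ)).symm (WeakDual.toStrongDual (φ i)) with hfdef
      have hφ_apply : ∀ i x, φ i x = (inner ℝ (f i) x : ℝ) := by
        intro i x
        rw [hfdef]
        exact (InnerProductSpace.toDual_symm_apply).symm
      have hint : ∀ i, Integrable (f i : (Fin n → ℝ) → ℝ) μ := fun i =>
        (Lp.memLp (f i)).integrable one_le_two
      have hae_nn : ∀ i, 0 ≤ᵐ[μ] (f i : (Fin n → ℝ) → ℝ) := by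
        intro i
        apply ae_nonneg_of_forall_setIntegral_nonneg (hint i)
        intro A hA hμA
        have h0 := (hφ1 A hA).1 i
        rwa [hφ_apply, eval_ind] at h0
      have hae_sum : ∀ᵐ v ∂μ, ∑ i, (f i : (Fin n → ℝ) → ℝ) v ≤ 1 := by
        have h0 := ae_nonneg_of_forall_setIntegral_nonneg
          (f := fun v => 1 - ∑ i, (f i : (Fin n → ℝ) → ℝ) v)
          ((integrable_const (1:ℝ)).sub (integrable_finset_sum _ fun i _ => hint i)) ?_
        · filter_upwards [h0] with v hv
          simp only [Pi.zero_apply] at hv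
          linarith
        · intro A hA hμA
          rw [integral_sub ((integrable_const (1:ℝ)).integrableOn)
            (integrable_finset_sum _ fun i _ => (hint i).integrableOn),
            integral_finset_sum _ fun i _ => (hint i).integrableOn]
          have h1 := (hφ1 A hA).2
          have h2 : ∑ i, φ i (ind A hA) = ∑ i, ∫ v in A, (f i : (Fin n → ℝ) → ℝ) v ∂μ :=
            Finset.sum_congr rfl fun i _ => by rw [hφ_apply, eval_ind]
          rw [h2] at h1
          have h3 : ∫ _ in A, (1:ℝ) ∂μ = (μ A).toReal := by simp [Measure.real]
          rw [h3]
          linarith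
      set h : Fin n → (Fin n → ℝ) → ℝ :=
        fun i => (Lp.aestronglyMeasurable (f i)).mk ((f i : (Fin n → ℝ) → ℝ)) with hhdef
      have h_meas : ∀ i, Measurable (h i) := fun i =>
        ((Lp.aestronglyMeasurable (f i)).stronglyMeasurable_mk).measurable
      have h_ae : ∀ i, (f i : (Fin n → ℝ) → ℝ) =ᵐ[μ] h i := fun i =>
        (Lp.aestronglyMeasurable (f i)).ae_eq_mk
      set s : Set (Fin n → ℝ) := {v | (∀ j, 0 ≤ h j v) ∧ ∑ j, h j v ≤ 1} with hsdef
      have hs_meas : MeasurableSet s := by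
        rw [hsdef, Set.setOf_and]
        refine MeasurableSet.inter ?_ ?_
        · rw [Set.setOf_forall]
          exact MeasurableSet.iInter fun j => measurableSet_le measurable_const (h_meas j)
        · exact measurableSet_le (Finset.measurable_sum _ fun j _ => h_meas j) measurable_const
      set p : (Fin n → ℝ) → (Fin n → ℝ) := s.piecewise (fun v j => h j v) (fun _ _ => 0)
        with hpdef
      have hp_meas : Measurable p :=
        Measurable.piecewise hs_meas (measurable_pi_lambda _ fun j => h_meas j) measurable_const
      have hp_alloc : IsAllocation vbar p := by
        refine ⟨hp_meas, fun v _ => ?_⟩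
        by_cases hvs : v ∈ s
        · rw [hpdef, Set.piecewise_eq_of_mem _ _ _ hvs]
          exact ⟨fun j => hvs.1 j, hvs.2⟩
        · rw [hpdef, Set.piecewise_eq_of_notMem _ _ _ hvs]
          exact ⟨fun j => le_refl 0, by simp⟩
      have hae_s : ∀ᵐ v ∂μ, v ∈ s := by
        have hall : ∀ᵐ v ∂μ, ∀ j, 0 ≤ h j v := by
          rw [ae_all_iff]
          intro j
          filter_upwards [hae_nn j, h_ae j] with v h1 h2
          rw [← h2]; exact h1
        have hsum' : ∀ᵐ v ∂μ, ∑ j, h j v ≤ 1 := by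
          have hfh : ∀ᵐ v ∂μ, ∀ j, (f j : (Fin n → ℝ) → ℝ) v = h j v := by
            rw [ae_all_iff]; intro j; exact h_ae j
          filter_upwards [hae_sum, hfh] with v h1 h2
          rw [← Finset.sum_congr rfl fun j _ => h2 j]
          exact h1
        filter_upwards [hall, hsum'] with v h1 h2
        exact ⟨h1, h2⟩
      refine ⟨p, hp_alloc, ?_⟩
      funext i
      rw [hΨdef]
      simp only []
      rw [hφ_apply, eval_g]
      show _ = realized D p i
      rw [realized]
      apply integral_congr_ae
      filter_upwards [ae_cube hsupp, h_ae i, hae_s] with v hvc hveq hvs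
      rw [hveq, hgf]
      simp only [Set.indicator_of_mem hvc]
      rw [hpdef, Set.piecewise_eq_of_mem _ _ _ hvs]
      ring
  rw [himg]
  exact (hKcomp.image hΨcont).isClosed

end Aux5
section Aux6

open MeasureTheory Set

variable {n : ℕ} {vbar : ℝ} {D : Fin n → Measure ℝ} [∀ i, IsProbabilityMeasure (D i)]

lemma Ustar_box (hsupp : ∀ i, D i (Set.Icc (0 : ℝ) vbar)ᶜ = 0) (hv : 0 < vbar) :
    ∀ U ∈ Ustar D vbar, ∀ i, 0 ≤ U i ∧ U i ≤ vbar := by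
  rintro U ⟨p, hp, rfl⟩ i
  exact realized_mem_box hsupp hv.le hp i

lemma Ustar_convex (hsupp : ∀ i, D i (Set.Icc (0 : ℝ) vbar)ᶜ = 0) (hv : 0 < vbar) :
    Convex ℝ (Ustar D vbar) := by
  intro X hX Y hY a b ha hb hab
  obtain ⟨p, hp, rfl⟩ := hX
  obtain ⟨q, hq, rfl⟩ := hY
  refine ⟨fun v => a • p v + b • q v, ⟨?_, ?_⟩, ?_⟩
  · exact (hp.1.const_smul a).add (hq.1.const_smul b)
  · intro v hvc
    have h1 := hp.2 v hvc; have h2 := hq.2 v hvc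
    constructor
    · intro i
      simp only [Pi.add_apply, Pi.smul_apply, smul_eq_mul]
      exact add_nonneg (mul_nonneg ha (h1.1 i)) (mul_nonneg hb (h2.1 i))
    · simp only [Pi.add_apply, Pi.smul_apply, smul_eq_mul]
      rw [Finset.sum_add_distrib, ← Finset.mul_sum, ← Finset.mul_sum]
      nlinarith [mul_le_mul_of_nonneg_left h1.2 ha, mul_le_mul_of_nonneg_left h2.2 hb]
  · funext i
    simp only [Pi.add_apply, Pi.smul_apply, smul_eq_mul, realized]
    have he : (fun v => v i * (a * p v i + b * q v i))
        = fun v => a * (v i * p v i) + b * (v i * q v i) := by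
      funext v; ring
    rw [show (∫ v, v i * (a * p v i + b * q v i) ∂(Measure.pi D))
        = ∫ v, (a * (v i * p v i) + b * (v i * q v i)) ∂(Measure.pi D) from by rw [he],
      integral_add ((integrable_vp hsupp hv.le hp i).const_mul a)
      ((integrable_vp hsupp hv.le hq i).const_mul b), integral_const_mul, integral_const_mul]

lemma integral_mem_Ustar (hsupp : ∀ i, D i (Set.Icc (0 : ℝ) vbar)ᶜ = 0) (hv : 0 < vbar)
    {W : (Fin n → ℝ) → (Fin n → ℝ)} (hW : Measurable W)
    (hval : ∀ v ∈ cube n vbar, W v ∈ Ustar D vbar) :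
    (fun i => ∫ v, W v i ∂(Measure.pi D)) ∈ Ustar D vbar := by
  have hbox : ∀ v ∈ cube n vbar, ∀ j, 0 ≤ W v j ∧ W v j ≤ vbar := fun v hvc j =>
    Ustar_box hsupp hv (W v) (hval v hvc) j
  have hWint : Integrable W (Measure.pi D) := by
    refine (integrable_const vbar).mono' hW.stronglyMeasurable.aestronglyMeasurable ?_
    filter_upwards [ae_cube hsupp] with v hvc
    rw [pi_norm_le_iff_of_nonneg hv.le]
    intro i
    rw [Real.norm_eq_abs, abs_of_nonneg (hbox v hvc i).1]
    exact (hbox v hvc i).2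
  have hmem : ∀ᵐ v ∂(Measure.pi D), W v ∈ Ustar D vbar := by
    filter_upwards [ae_cube hsupp] with v hvc
    exact hval v hvc
  have hint_mem := (Ustar_convex hsupp hv).integral_mem (Ustar_isClosed hsupp hv) hmem hWint
  have heq : (fun i => ∫ v, W v i ∂(Measure.pi D)) = ∫ v, W v ∂(Measure.pi D) := by
    funext i
    have := (ContinuousLinearMap.proj (R := ℝ) (φ := fun _ : Fin n => ℝ) i).integral_comp_comm
      hWint
    simpa using this
  rw [heq]
  exact hint_mem

lemma Vset_subset_Ustar (hsupp : ∀ i, D i (Set.Icc (0 : ℝ) vbar)ᶜ = 0) (hv : 0 < vbar) :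
    ∀ t : ℕ, Vset D vbar t ⊆ Ustar D vbar
  | 0 => by intro U hU; simp [Vset] at hU
  | 1 => by
    rintro U ⟨p, hp, _, rfl⟩
    exact ⟨p, hp, rfl⟩
  | (S+2) => by
    intro U hU
    obtain ⟨hpos, p, W, hp, hW, hpk, hval, hic⟩ := hU
    have hWmem : ∀ v ∈ cube n vbar, W v ∈ Ustar D vbar := fun v hvc =>
      Vset_subset_Ustar hsupp hv (S+1) (hval v hvc)
    have hWb := Wbox_abs hsupp hv hval
    have hY := integral_mem_Ustar hsupp hv hW hWmem
    have hX : realized D p ∈ Ustar D vbar := ⟨p, hp, rfl⟩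
    have hx0 : (0:ℝ) ≤ (S:ℝ) := by positivity
    have h2 : (0:ℝ) < (S:ℝ)+2 := by linarith
    have ha : (0:ℝ) ≤ 1 - (1 - 1/((S:ℝ)+2)) := by
      have : (0:ℝ) ≤ 1/((S:ℝ)+2) := by positivity
      linarith
    have hb : (0:ℝ) ≤ 1 - 1/((S:ℝ)+2) := by
      have : 1/((S:ℝ)+2) ≤ 1 := by rw [div_le_one h2]; linarith
      linarith
    have hcomb := (Ustar_convex hsupp hv) hX hY ha hb (by ring)
    have heq : U = (1 - (1 - 1/((S:ℝ)+2))) • realized D p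
        + (1 - 1/((S:ℝ)+2)) • (fun i => ∫ v, W v i ∂(Measure.pi D)) := by
      funext i
      simp only [Pi.add_apply, Pi.smul_apply, smul_eq_mul]
      exact (hpk i).trans
        (stage_split hsupp hv.le hp hW (C := vbar) i (fun v hvc => hWb v hvc i) _ _)
    rw [heq]
    exact hcomb

end Aux6
/-- for every `T ≥ 2`, `𝒱_{T−1} ⊆ 𝒱_T` and `𝒱_T ⊆ 𝒰_{1−1/T}`. -/
theorem Vset_mono_and_subset_Ugamma {n : ℕ} (hn : 2 ≤ n) (vbar : ℝ) (hv : 0 < vbar)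
    (D : Fin n → Measure ℝ) [∀ i, IsProbabilityMeasure (D i)]
    (hsupp : ∀ i, D i (Set.Icc (0 : ℝ) vbar)ᶜ = 0)
    (T : ℕ) (hT : 2 ≤ T) :
    Vset D vbar (T - 1) ⊆ Vset D vbar T ∧
      Vset D vbar T ⊆ Ugamma D vbar (1 - 1 / (T : ℝ)) := by
  classical
  obtain ⟨S, rfl⟩ : ∃ S, T = S + 2 := ⟨T - 2, by omega⟩
  constructor
  · have h1 : S + 2 - 1 = S + 1 := by omega
    rw [h1]
    exact Vset_mono hsupp hv S
  · intro U hU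
    have hγ : (1 : ℝ) - 1 / ((S + 2 : ℕ) : ℝ) = 1 - 1 / ((S : ℝ) + 2) := by
      push_cast; ring
    rw [hγ]
    have hex : ∀ U' ∈ Vset D vbar (S+2),
        ∃ p W : (Fin n → ℝ) → (Fin n → ℝ), IsAllocation vbar p ∧ Measurable W ∧
          (∀ i, U' i = ∫ v, ((1 - (1 - 1 / ((S : ℝ) + 2))) * (v i * p v i)
              + (1 - 1 / ((S : ℝ) + 2)) * W v i) ∂(Measure.pi D)) ∧
          (∀ v ∈ cube n vbar, W v ∈ Vset D vbar (S + 1)) ∧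
          (∀ i, ∀ a ∈ Set.Icc (0 : ℝ) vbar, ∀ b ∈ Set.Icc (0 : ℝ) vbar,
            (1 - (1 - 1 / ((S : ℝ) + 2))) * a * interimFn D p i b
                + (1 - 1 / ((S : ℝ) + 2)) * interimFn D W i b ≤
              (1 - (1 - 1 / ((S : ℝ) + 2))) * a * interimFn D p i a
                + (1 - 1 / ((S : ℝ) + 2)) * interimFn D W i a) :=
      fun U' hU' => hU'.2
    choose! pf Wf h1 h2 h3 h4 h5 using hex
    refine ⟨fun i => (Vset_box hsupp hv (S+2) U hU i).1,
      Vset D vbar (S+2), Vset_subset_Ustar hsupp hv (S+2), hU,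
      pf, Wf, h1, h2, h3, ?_, h5⟩
    intro U' hU' v hvc
    exact Vset_mono hsupp hv S (h4 U' hU' v hvc)
end
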